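/- arXiv:2105.00709 — 5 statements merged into one kernel-verified Lean document; each statement's English description precedes it below -/
import Mathlib

section
/- Let l ≥ 1 be an integer and p ∈ ℝ, and let C = (id ⊗ transpose)(C_{Φ_p}) ∈ M₂(ℂ) ⊗ M_{l+1}(ℂ) be the partial transpose of the Choi matrix of Φ_p. Set λ₊ = (1−p)·2/(l+1) + p·2/((l+1)(l+2)) and λ₋ = −(1−p)·2/(l(l+1)) + p·2/(l+1). Then: C(|0⟩⊗|0⟩) = λ₊ |0⟩⊗|0⟩; C(|1⟩⊗|l⟩) = λ₊ |1⟩⊗|l⟩; for each 0 ≤ s ≤ l−1, C(√(l−s)|0⟩⊗|s+1⟩ + √(s+1)|1⟩⊗|s⟩) = λ₊(√(l−s)|0⟩⊗|s+1⟩ + √(s+1)|1⟩⊗|s⟩) and C(√(s+1)|0⟩⊗|s+1⟩ − √(l−s)|1⟩⊗|s⟩) = λ₋(√(s+1)|0⟩⊗|s+1⟩ − √(l−s)|1⟩⊗|s⟩). In particular, C has only the eigenvalues λ₊ (with multiplicity l+2) and λ₋ (with multiplicity l). -/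
open Matrix BigOperators
open scoped Kronecker ComplexOrder

noncomputable section

/-- The extremal channel `Φ⁻ = Φ^{1→l}_{l-1}` defined entrywise by linear extension. -/
def PhiM (l : ℕ) (X : Matrix (Fin 2) (Fin 2) ℂ) : Matrix (Fin (l+1)) (Fin (l+1)) ℂ :=
  fun i j =>
    (2 / ((l : ℂ) * ((l : ℂ) + 1))) *
      (if (i : ℕ) = (j : ℕ) then
        ((l - (i : ℕ) : ℕ) : ℂ) * X 0 0 + ((i : ℕ) : ℂ) * X 1 1
       else if (j : ℕ) = (i : ℕ) + 1 then
        ((Real.sqrt ((l - (i : ℕ)) * ((i : ℕ) + 1)) : ℝ) : ℂ) * X 0 1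
       else if (i : ℕ) = (j : ℕ) + 1 then
        ((Real.sqrt ((l - (j : ℕ)) * ((j : ℕ) + 1)) : ℝ) : ℂ) * X 1 0
       else 0)

/-- The extremal channel `Φ⁺ = Φ^{1→l}_{l+1}` defined entrywise by linear extension. -/
def PhiP (l : ℕ) (X : Matrix (Fin 2) (Fin 2) ℂ) : Matrix (Fin (l+1)) (Fin (l+1)) ℂ :=
  fun i j =>
    (2 / (((l : ℂ) + 1) * ((l : ℂ) + 2))) *
      (if (i : ℕ) = (j : ℕ) then
        (((i : ℕ) : ℂ) + 1) * X 0 0 + (((l - (i : ℕ) : ℕ) : ℂ) + 1) * X 1 1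
       else if (j : ℕ) = (i : ℕ) + 1 then
        -(((Real.sqrt ((l - (i : ℕ)) * ((i : ℕ) + 1)) : ℝ) : ℂ)) * X 0 1
       else if (i : ℕ) = (j : ℕ) + 1 then
        -(((Real.sqrt ((l - (j : ℕ)) * ((j : ℕ) + 1)) : ℝ) : ℂ)) * X 1 0
       else 0)

/-- `Φ_p = (1-p)Φ⁻ + pΦ⁺`. -/
def PhiFam (l : ℕ) (p : ℝ) (X : Matrix (Fin 2) (Fin 2) ℂ) :
    Matrix (Fin (l+1)) (Fin (l+1)) ℂ :=
  ((1 - p : ℝ) : ℂ) • PhiM l X + ((p : ℝ) : ℂ) • PhiP l X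

/-- The Choi matrix `C_Θ = ∑_{i,j} E_{ij} ⊗ Θ(E_{ij})`. -/
def choi {k n : ℕ} (Θ : Matrix (Fin k) (Fin k) ℂ → Matrix (Fin n) (Fin n) ℂ) :
    Matrix (Fin k × Fin n) (Fin k × Fin n) ℂ :=
  fun x y => Θ (Matrix.single x.1 y.1 1) x.2 y.2

/-- The partial transpose `(id ⊗ transpose)(C_Θ)` of the Choi matrix. -/
def choiPT {k n : ℕ} (Θ : Matrix (Fin k) (Fin k) ℂ → Matrix (Fin n) (Fin n) ℂ) :
    Matrix (Fin k × Fin n) (Fin k × Fin n) ℂ :=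
  fun x y => Θ (Matrix.single x.1 y.1 1) y.2 x.2

/-- `Θ` is PPT if the partial transpose of its Choi matrix is positive semidefinite. -/
def IsPPT {k n : ℕ} (Θ : Matrix (Fin k) (Fin k) ℂ → Matrix (Fin n) (Fin n) ℂ) : Prop :=
  (choiPT Θ).PosSemidef

/-- `Θ` is entanglement-breaking if its Choi matrix is separable. -/
def IsEBT {k n : ℕ} (Θ : Matrix (Fin k) (Fin k) ℂ → Matrix (Fin n) (Fin n) ℂ) : Prop :=
  ∃ (N : ℕ) (A : Fin N → Matrix (Fin k) (Fin k) ℂ) (B : Fin N → Matrix (Fin n) (Fin n) ℂ),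
    (∀ t, (A t).PosSemidef) ∧ (∀ t, (B t).PosSemidef) ∧ choi Θ = ∑ t, A t ⊗ₖ B t

/-- standard basis vector `|a⟩ ⊗ |b⟩` of `ℂ² ⊗ ℂ^{l+1}`. -/
def ket2 (l : ℕ) (a : Fin 2) (b : Fin (l+1)) : Fin 2 × Fin (l+1) → ℂ :=
  fun x => if x = (a, b) then 1 else 0

/-- `λ₊ = (1-p)·2/(l+1) + p·2/((l+1)(l+2))`. -/
def lamPlus (l : ℕ) (p : ℝ) : ℝ :=
  (1 - p) * (2 / ((l : ℝ) + 1)) + p * (2 / (((l : ℝ) + 1) * ((l : ℝ) + 2)))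

/-- `λ₋ = -(1-p)·2/(l(l+1)) + p·2/(l+1)`. -/
def lamMinus (l : ℕ) (p : ℝ) : ℝ :=
  -((1 - p) * (2 / ((l : ℝ) * ((l : ℝ) + 1)))) + p * (2 / ((l : ℝ) + 1))

lemma mulVec_ket2K (l : ℕ) (M : Matrix (Fin 2 × Fin (l+1)) (Fin 2 × Fin (l+1)) ℂ)
    (a : Fin 2) (b : Fin (l+1)) :
    M.mulVec (ket2 l a b) = fun x => M x (a, b) := by
  funext x; simp [Matrix.mulVec, dotProduct, ket2]

set_option maxHeartbeats 1000000 in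
lemma eig1 (l : ℕ) (hl : 1 ≤ l) (p : ℝ) :
    (choiPT (PhiFam l p)).mulVec (ket2 l 0 0)
        = ((lamPlus l p : ℝ) : ℂ) • ket2 l 0 0 := by
  have hl0 : (l:ℂ) ≠ 0 := Nat.cast_ne_zero.mpr (by omega)
  rw [mulVec_ket2K]
  funext x
  obtain ⟨c, d⟩ := x
  fin_cases c <;>
    simp [choiPT, PhiFam, PhiM, PhiP, Matrix.single, ket2, lamPlus, Prod.ext_iff,
      Fin.ext_iff, -Fin.val_eq_zero_iff]
  by_cases h : (d:ℕ) = 0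
  · rw [h]; simp only [if_pos rfl, if_true]; field_simp
  · simp [h, Ne.symm h]

set_option maxHeartbeats 1000000 in
lemma eig2 (l : ℕ) (hl : 1 ≤ l) (p : ℝ) :
    (choiPT (PhiFam l p)).mulVec (ket2 l 1 ⟨l, l.lt_succ_self⟩)
        = ((lamPlus l p : ℝ) : ℂ) • ket2 l 1 ⟨l, l.lt_succ_self⟩ := by
  have hl0 : (l:ℂ) ≠ 0 := Nat.cast_ne_zero.mpr (by omega)
  rw [mulVec_ket2K]
  funext x
  obtain ⟨c, d⟩ := x
  fin_cases c <;>
    simp [choiPT, PhiFam, PhiM, PhiP, Matrix.single, ket2, lamPlus, Prod.ext_iff,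
      Fin.ext_iff]
  by_cases h : (d:ℕ) = l
  · rw [h]; simp only [if_pos rfl, if_true]
    field_simp
  · simp [h, Ne.symm h]

set_option maxHeartbeats 1000000 in
lemma eig3 (l : ℕ) (hl : 1 ≤ l) (p : ℝ) : (∀ s : ℕ, ∀ hs : s ≤ l - 1,
        (choiPT (PhiFam l p)).mulVec
            (((Real.sqrt (l - s) : ℝ) : ℂ) • ket2 l 0 ⟨s + 1, by have _h := hs; omega⟩
              + ((Real.sqrt (s + 1) : ℝ) : ℂ) • ket2 l 1 ⟨s, by have _h := hs; omega⟩)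
          = ((lamPlus l p : ℝ) : ℂ) •
            (((Real.sqrt (l - s) : ℝ) : ℂ) • ket2 l 0 ⟨s + 1, by have _h := hs; omega⟩
              + ((Real.sqrt (s + 1) : ℝ) : ℂ) • ket2 l 1 ⟨s, by have _h := hs; omega⟩)) := by
  intro s hs
  have hsl : s + 1 ≤ l := by omega
  have hsR : (s:ℝ) ≤ l := by exact_mod_cast (by omega : s ≤ l)
  have hls' : (0:ℝ) ≤ (l:ℝ) - s := by linarith
  have hK : Real.sqrt (((l:ℝ) - s) * ((s:ℝ)+1)) = Real.sqrt ((l:ℝ)-s) * Real.sqrt ((s:ℝ)+1) :=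
    Real.sqrt_mul hls' _
  have hA2 : ((Real.sqrt ((l:ℝ)-(s:ℝ)) : ℝ):ℂ)^2 = (l:ℂ) - s := by
    rw [← Complex.ofReal_pow, Real.sq_sqrt hls']; push_cast; ring
  have hB2 : ((Real.sqrt ((s:ℝ)+1) : ℝ):ℂ)^2 = (s:ℂ) + 1 := by
    rw [← Complex.ofReal_pow, Real.sq_sqrt (by positivity)]; push_cast; ring
  have hl0 : (l:ℂ) ≠ 0 := Nat.cast_ne_zero.mpr (by omega)
  have hl1 : (l:ℂ) + 1 ≠ 0 := by
    have : ((l+1:ℕ):ℂ) ≠ 0 := Nat.cast_ne_zero.mpr (by omega)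
    push_cast at this; exact this
  have hl2 : (l:ℂ) + 2 ≠ 0 := by
    have : ((l+2:ℕ):ℂ) ≠ 0 := Nat.cast_ne_zero.mpr (by omega)
    push_cast at this; exact this
  rw [Matrix.mulVec_add, Matrix.mulVec_smul, Matrix.mulVec_smul, mulVec_ket2K, mulVec_ket2K]
  funext x
  obtain ⟨c, d⟩ := x
  fin_cases c <;>
    simp [choiPT, PhiFam, PhiM, PhiP, Matrix.single, ket2, lamPlus, Prod.ext_iff,
      Fin.ext_iff, -Fin.val_eq_zero_iff]
  · by_cases h : (d:ℕ) = s + 1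
    · rw [h]
      simp only [if_pos rfl, if_true, if_neg (show ¬ (s = s + 1) by omega)]
      rw [Nat.cast_sub hsl, hK]
      push_cast
      generalize hGA : ((Real.sqrt ((l:ℝ)-(s:ℝ)) : ℝ):ℂ) = A at hA2 ⊢
      generalize hGB : ((Real.sqrt ((s:ℝ)+1) : ℝ):ℂ) = B at hB2 ⊢
      field_simp
      ring_nf
      simp only [hA2, hB2]
      ring
    · simp [h, Ne.symm h]
  · by_cases h : (d:ℕ) = s
    · rw [h]
      simp only [if_pos rfl, if_true, if_neg (show ¬ (s + 1 = s) by omega),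
        if_neg (show ¬ (s = s + 1 + 1) by omega)]
      rw [Nat.cast_sub (show s ≤ l by omega), hK]
      push_cast
      generalize hGA : ((Real.sqrt ((l:ℝ)-(s:ℝ)) : ℝ):ℂ) = A at hA2 ⊢
      generalize hGB : ((Real.sqrt ((s:ℝ)+1) : ℝ):ℂ) = B at hB2 ⊢
      field_simp
      ring_nf
      simp only [hA2, hB2]
      ring
    · simp [h, Ne.symm h]

set_option maxHeartbeats 1000000 in
lemma eig4 (l : ℕ) (hl : 1 ≤ l) (p : ℝ) : (∀ s : ℕ, ∀ hs : s ≤ l - 1,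
        (choiPT (PhiFam l p)).mulVec
            (((Real.sqrt (s + 1) : ℝ) : ℂ) • ket2 l 0 ⟨s + 1, by have _h := hs; omega⟩
              - ((Real.sqrt (l - s) : ℝ) : ℂ) • ket2 l 1 ⟨s, by have _h := hs; omega⟩)
          = ((lamMinus l p : ℝ) : ℂ) •
            (((Real.sqrt (s + 1) : ℝ) : ℂ) • ket2 l 0 ⟨s + 1, by have _h := hs; omega⟩
              - ((Real.sqrt (l - s) : ℝ) : ℂ) • ket2 l 1 ⟨s, by have _h := hs; omega⟩)) := by
  intro s hs
  have hsl : s + 1 ≤ l := by omega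
  have hsR : (s:ℝ) ≤ l := by exact_mod_cast (by omega : s ≤ l)
  have hls' : (0:ℝ) ≤ (l:ℝ) - s := by linarith
  have hK : Real.sqrt (((l:ℝ) - s) * ((s:ℝ)+1)) = Real.sqrt ((l:ℝ)-s) * Real.sqrt ((s:ℝ)+1) :=
    Real.sqrt_mul hls' _
  have hA2 : ((Real.sqrt ((l:ℝ)-(s:ℝ)) : ℝ):ℂ)^2 = (l:ℂ) - s := by
    rw [← Complex.ofReal_pow, Real.sq_sqrt hls']; push_cast; ring
  have hB2 : ((Real.sqrt ((s:ℝ)+1) : ℝ):ℂ)^2 = (s:ℂ) + 1 := by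
    rw [← Complex.ofReal_pow, Real.sq_sqrt (by positivity)]; push_cast; ring
  have hl0 : (l:ℂ) ≠ 0 := Nat.cast_ne_zero.mpr (by omega)
  have hl1 : (l:ℂ) + 1 ≠ 0 := by
    have : ((l+1:ℕ):ℂ) ≠ 0 := Nat.cast_ne_zero.mpr (by omega)
    push_cast at this; exact this
  have hl2 : (l:ℂ) + 2 ≠ 0 := by
    have : ((l+2:ℕ):ℂ) ≠ 0 := Nat.cast_ne_zero.mpr (by omega)
    push_cast at this; exact this
  rw [Matrix.mulVec_sub, Matrix.mulVec_smul, Matrix.mulVec_smul, mulVec_ket2K, mulVec_ket2K]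
  funext x
  obtain ⟨c, d⟩ := x
  fin_cases c <;>
    simp [choiPT, PhiFam, PhiM, PhiP, Matrix.single, ket2, lamMinus, Prod.ext_iff,
      Fin.ext_iff, -Fin.val_eq_zero_iff]
  · by_cases h : (d:ℕ) = s + 1
    · rw [h]
      simp only [if_pos rfl, if_true, if_neg (show ¬ (s = s + 1) by omega)]
      rw [Nat.cast_sub hsl, hK]
      push_cast
      generalize hGA : ((Real.sqrt ((l:ℝ)-(s:ℝ)) : ℝ):ℂ) = A at hA2 ⊢
      generalize hGB : ((Real.sqrt ((s:ℝ)+1) : ℝ):ℂ) = B at hB2 ⊢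
      field_simp
      ring_nf
      simp only [hA2, hB2]
      ring
    · simp [h, Ne.symm h]
  · by_cases h : (d:ℕ) = s
    · rw [h]
      simp only [if_pos rfl, if_true, if_neg (show ¬ (s + 1 = s) by omega),
        if_neg (show ¬ (s = s + 1 + 1) by omega)]
      rw [Nat.cast_sub (show s ≤ l by omega), hK]
      push_cast
      generalize hGA : ((Real.sqrt ((l:ℝ)-(s:ℝ)) : ℝ):ℂ) = A at hA2 ⊢
      generalize hGB : ((Real.sqrt ((s:ℝ)+1) : ℝ):ℂ) = B at hB2 ⊢
      field_simp
      ring_nf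
      simp only [hA2, hB2]
      ring
    · simp [h, Ne.symm h]
def Umat (l : ℕ) : Matrix (Fin 2 × Fin (l+1)) (Fin 2 × Fin (l+1)) ℂ :=
  fun x y =>
    (((Real.sqrt ((l:ℝ)+1))⁻¹ : ℝ) : ℂ) *
    (if y.1 = 0 then
       (if x.1 = 0 ∧ (x.2:ℕ) = (y.2:ℕ) then ((Real.sqrt ((l:ℝ) + 1 - ((y.2:ℕ):ℝ)) : ℝ) : ℂ)
        else if x.1 = 1 ∧ (x.2:ℕ) + 1 = (y.2:ℕ) then ((Real.sqrt (((y.2:ℕ):ℝ)) : ℝ) : ℂ)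
        else 0)
     else if (y.2:ℕ) = l then
       (if x.1 = 1 ∧ (x.2:ℕ) = l then ((Real.sqrt ((l:ℝ)+1) : ℝ) : ℂ) else 0)
     else
       (if x.1 = 0 ∧ (x.2:ℕ) = (y.2:ℕ) + 1 then ((Real.sqrt (((y.2:ℕ):ℝ) + 1) : ℝ) : ℂ)
        else if x.1 = 1 ∧ (x.2:ℕ) = (y.2:ℕ) then -((Real.sqrt ((l:ℝ) - ((y.2:ℕ):ℝ)) : ℝ) : ℂ)
        else 0))

lemma col0 (l : ℕ) (b : Fin (l+1)) (x : Fin 2 × Fin (l+1)) :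
    Umat l x (0, b) =
      (((Real.sqrt ((l:ℝ)+1))⁻¹ : ℝ) : ℂ) *
        (((Real.sqrt ((l:ℝ) + 1 - ((b:ℕ):ℝ)) : ℝ) : ℂ) * ket2 l 0 b x
          + ((Real.sqrt (((b:ℕ):ℝ)) : ℝ) : ℂ) * ket2 l 1 ⟨(b:ℕ)-1, by omega⟩ x) := by
  obtain ⟨c, d⟩ := x
  fin_cases c
  · simp only [Umat, ket2, Prod.ext_iff, Fin.ext_iff]
    by_cases h : (d:ℕ) = (b:ℕ) <;> simp [h, Prod.ext_iff, Fin.ext_iff]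
  · simp only [Umat, ket2, Prod.ext_iff, Fin.ext_iff]
    by_cases hb0 : (b:ℕ) = 0
    · simp [hb0, Prod.ext_iff, Fin.ext_iff, -Fin.val_eq_zero_iff]
    · by_cases h : (d:ℕ) + 1 = (b:ℕ)
      · simp [h, show (d:ℕ) = (b:ℕ)-1 by omega, Prod.ext_iff, Fin.ext_iff, -Fin.val_eq_zero_iff]
        exact fun h' => absurd (by omega) h'
      · simp [h, show ¬((d:ℕ) = (b:ℕ)-1) by omega, Prod.ext_iff, Fin.ext_iff]

lemma colL (l : ℕ) (x : Fin 2 × Fin (l+1)) :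
    Umat l x (1, ⟨l, l.lt_succ_self⟩) = ket2 l 1 ⟨l, l.lt_succ_self⟩ x := by
  have hs : Real.sqrt ((l:ℝ)+1) ≠ 0 := by positivity
  obtain ⟨c, d⟩ := x
  fin_cases c <;> simp [Umat, ket2, Prod.ext_iff, Fin.ext_iff]
  by_cases h : (d:ℕ) = l <;> simp [h]
  exact inv_mul_cancel₀ (Complex.ofReal_ne_zero.mpr hs)

lemma col1 (l : ℕ) (b : Fin (l+1)) (hb : (b:ℕ) ≠ l) (x : Fin 2 × Fin (l+1)) :
    Umat l x (1, b) =
      (((Real.sqrt ((l:ℝ)+1))⁻¹ : ℝ) : ℂ) *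
        (((Real.sqrt (((b:ℕ):ℝ) + 1) : ℝ) : ℂ) * ket2 l 0 ⟨(b:ℕ)+1, by omega⟩ x
          - ((Real.sqrt ((l:ℝ) - ((b:ℕ):ℝ)) : ℝ) : ℂ) * ket2 l 1 b x) := by
  obtain ⟨c, d⟩ := x
  fin_cases c
  · simp only [Umat, ket2, Prod.ext_iff, Fin.ext_iff]
    by_cases h : (d:ℕ) = (b:ℕ)+1 <;> simp [h, hb, Prod.ext_iff, Fin.ext_iff]
  · simp only [Umat, ket2, Prod.ext_iff, Fin.ext_iff]
    by_cases h : (d:ℕ) = (b:ℕ) <;> simp [h, hb, Prod.ext_iff, Fin.ext_iff]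
lemma ket2_dot (l : ℕ) (a a' : Fin 2) (b b' : Fin (l+1)) :
    ∑ x, ket2 l a b x * ket2 l a' b' x = if a = a' ∧ b = b' then 1 else 0 := by
  simp only [ket2, ite_mul, one_mul, zero_mul]
  rw [Finset.sum_ite_eq' Finset.univ ((a,b) : Fin 2 × Fin (l+1))
    (fun x => if x = (a',b') then (1:ℂ) else 0)]
  simp [Prod.ext_iff, and_comm]

lemma dot_expand (l : ℕ) (r r' α β γ δ : ℂ) (k1 k2 k3 k4 : Fin 2 × Fin (l+1) → ℂ) :
    ∑ x, (r * (α * k1 x + β * k2 x)) * (r' * (γ * k3 x + δ * k4 x))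
      = r*r'*α*γ * (∑ x, k1 x * k3 x) + r*r'*α*δ * (∑ x, k1 x * k4 x)
        + r*r'*β*γ * (∑ x, k2 x * k3 x) + r*r'*β*δ * (∑ x, k2 x * k4 x) := by
  simp only [Finset.mul_sum, ← Finset.sum_add_distrib]
  exact Finset.sum_congr rfl fun x _ => by ring

lemma dot_expandL (l : ℕ) (r α β : ℂ) (k1 k2 k3 : Fin 2 × Fin (l+1) → ℂ) :
    ∑ x, (r * (α * k1 x + β * k2 x)) * k3 x
      = r*α * (∑ x, k1 x * k3 x) + r*β * (∑ x, k2 x * k3 x) := by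
  simp only [Finset.mul_sum, ← Finset.sum_add_distrib]
  exact Finset.sum_congr rfl fun x _ => by ring

lemma dot_expandR (l : ℕ) (r α β : ℂ) (k1 k2 k3 : Fin 2 × Fin (l+1) → ℂ) :
    ∑ x, k3 x * (r * (α * k1 x + β * k2 x))
      = r*α * (∑ x, k3 x * k1 x) + r*β * (∑ x, k3 x * k2 x) := by
  simp only [Finset.mul_sum, ← Finset.sum_add_distrib]
  exact Finset.sum_congr rfl fun x _ => by ring
set_option maxHeartbeats 2000000 in
lemma UtU (l : ℕ) (hl : 1 ≤ l) : (Umat l)ᵀ * Umat l = 1 := by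
  have hsq : ∀ t : ℝ, 0 ≤ t → Real.sqrt t * Real.sqrt t = t := fun t ht => Real.mul_self_sqrt ht
  have h1 : Real.sqrt ((l:ℝ)+1) ≠ 0 := by positivity
  ext y y'
  rw [Matrix.mul_apply, Matrix.one_apply]
  simp only [Matrix.transpose_apply]
  obtain ⟨a, b⟩ := y
  obtain ⟨a', b'⟩ := y'
  have hbR : ((b:ℕ):ℝ) ≤ l := by exact_mod_cast Nat.lt_succ_iff.mp b.isLt
  have hb'R : ((b':ℕ):ℝ) ≤ l := by exact_mod_cast Nat.lt_succ_iff.mp b'.isLt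
  rcases a with ⟨av, hav⟩
  rcases a' with ⟨av', hav'⟩
  rcases av with _ | _ | av
  · rcases av' with _ | _ | av'
    · -- (0,b) vs (0,b')
      rw [show (⟨0, hav⟩ : Fin 2) = 0 from rfl]
      try rw [show (⟨0, hav'⟩ : Fin 2) = 0 from rfl]
      simp only [col0, dot_expand, ket2_dot]
      by_cases hbb : b = b'
      · subst hbb
        simp only [and_self, if_true, if_pos rfl, Prod.mk.injEq, Fin.ext_iff]
        norm_num
        have e1 : Real.sqrt ((l:ℝ)+1-(b:ℕ)) ^ 2 = (l:ℝ)+1-(b:ℕ) := Real.sq_sqrt (by linarith)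
        have e2 : Real.sqrt ((b:ℕ):ℝ) ^ 2 = ((b:ℕ):ℝ) := Real.sq_sqrt (by positivity)
        have e3 : Real.sqrt ((l:ℝ)+1) ^ 2 = (l:ℝ)+1 := Real.sq_sqrt (by positivity)
        have e1' := hsq ((l:ℝ)+1-(b:ℕ)) (by linarith)
        have e2' := hsq ((b:ℕ):ℝ) (by positivity)
        have e3' := hsq ((l:ℝ)+1) (by positivity)
        rw [← Complex.ofReal_one]
        simp only [← Complex.ofReal_inv, ← Complex.ofReal_mul, ← Complex.ofReal_add, Complex.ofReal_inj]
        field_simp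
        nlinarith [e1, e2, e3, e1', e2', e3']
      · have hbbn : (b:ℕ) ≠ (b':ℕ) := fun h => hbb (Fin.ext h)
        norm_num [Prod.ext_iff, Fin.ext_iff, -Fin.val_eq_zero_iff, hbbn]
        by_cases h2 : (b:ℕ) - 1 = (b':ℕ) - 1
        · rcases (show (b:ℕ) = 0 ∨ (b':ℕ) = 0 by omega) with h0 | h0 <;>
            simp [h0, h2]
        · simp [h2]
    · -- (0,b) vs (1,b')
      rw [show (⟨0, hav⟩ : Fin 2) = 0 from rfl]
      try rw [show (⟨0+1, hav'⟩ : Fin 2) = 1 from rfl]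
      by_cases hb'l : (b':ℕ) = l
      · have e' : b' = ⟨l, l.lt_succ_self⟩ := Fin.ext hb'l
        subst e'
        simp only [col0, colL, dot_expandL, ket2_dot]
        have hne : ¬((b:ℕ) - 1 = l) := by omega
        simp [Prod.ext_iff, Fin.ext_iff, hne]
      · simp only [col0, col1 l b' hb'l, sub_eq_add_neg, ← neg_mul, dot_expand, ket2_dot]
        by_cases h : (b:ℕ) = (b':ℕ) + 1
        · have h' : (b:ℕ) - 1 = (b':ℕ) := by omega
          have hbr : ((b:ℕ):ℝ) = ((b':ℕ):ℝ) + 1 := by exact_mod_cast h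
          rw [show (l:ℝ) + 1 + -((b:ℕ):ℝ) = (l:ℝ) + -((b':ℕ):ℝ) by rw [hbr]; ring]
          rw [show Real.sqrt ((b:ℕ):ℝ) = Real.sqrt (((b':ℕ):ℝ)+1) by rw [hbr]]
          simp only [Prod.mk.injEq, Fin.ext_iff, h, h',
            show ((⟨(b:ℕ)-1, by omega⟩ : Fin (l+1)) : ℕ) = (b:ℕ)-1 from rfl,
            show ((⟨(b':ℕ)+1, by omega⟩ : Fin (l+1)) : ℕ) = (b':ℕ)+1 from rfl]
          norm_num
          ring
        · simp only [Prod.mk.injEq, Fin.ext_iff,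
            show ((⟨(b:ℕ)-1, by omega⟩ : Fin (l+1)) : ℕ) = (b:ℕ)-1 from rfl,
            show ((⟨(b':ℕ)+1, by omega⟩ : Fin (l+1)) : ℕ) = (b':ℕ)+1 from rfl, h]
          norm_num
          by_cases h2 : (b:ℕ) - 1 = (b':ℕ)
          · have h0 : (b:ℕ) = 0 := by omega
            simp [h0, h2]; exact fun _ => Or.inl (Or.inr (Fin.ext (by simp [h0])))
          · simp [h2]
    · exact absurd hav' (by omega)
  · rcases av' with _ | _ | av'
    · -- (1,b) vs (0,b')
      rw [show (⟨0+1, hav⟩ : Fin 2) = 1 from rfl]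
      try rw [show (⟨0, hav'⟩ : Fin 2) = 0 from rfl]
      by_cases hbl : (b:ℕ) = l
      · have e : b = ⟨l, l.lt_succ_self⟩ := Fin.ext hbl
        subst e
        simp only [col0, colL, dot_expandR, ket2_dot]
        have hne : ¬(l = (b':ℕ) - 1) := by omega
        simp [Prod.ext_iff, Fin.ext_iff, hne]
      · simp only [col0, col1 l b hbl, sub_eq_add_neg, ← neg_mul, dot_expand, ket2_dot]
        by_cases h : (b':ℕ) = (b:ℕ) + 1
        · have h' : (b':ℕ) - 1 = (b:ℕ) := by omega
          have hbr : ((b':ℕ):ℝ) = ((b:ℕ):ℝ) + 1 := by exact_mod_cast h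
          rw [show (l:ℝ) + 1 + -((b':ℕ):ℝ) = (l:ℝ) + -((b:ℕ):ℝ) by rw [hbr]; ring]
          rw [show Real.sqrt ((b':ℕ):ℝ) = Real.sqrt (((b:ℕ):ℝ)+1) by rw [hbr]]
          simp only [Prod.mk.injEq, Fin.ext_iff, h, h',
            show ((⟨(b':ℕ)-1, by omega⟩ : Fin (l+1)) : ℕ) = (b':ℕ)-1 from rfl,
            show ((⟨(b:ℕ)+1, by omega⟩ : Fin (l+1)) : ℕ) = (b:ℕ)+1 from rfl]
          norm_num
          ring
        · simp only [Prod.mk.injEq, Fin.ext_iff,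
            show ((⟨(b':ℕ)-1, by omega⟩ : Fin (l+1)) : ℕ) = (b':ℕ)-1 from rfl,
            show ((⟨(b:ℕ)+1, by omega⟩ : Fin (l+1)) : ℕ) = (b:ℕ)+1 from rfl, h]
          norm_num
          by_cases h2 : (b':ℕ) - 1 = (b:ℕ)
          · have h0 : (b':ℕ) = 0 := by omega
            simp [h0, h2]
          · simp [h2, show ¬((b:ℕ)+1 = (b':ℕ)) by omega, show ¬((b:ℕ) = (b':ℕ)-1) by omega]
    · -- (1,b) vs (1,b')
      rw [show (⟨0+1, hav⟩ : Fin 2) = 1 from rfl]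
      try rw [show (⟨0+1, hav'⟩ : Fin 2) = 1 from rfl]
      by_cases hbl : (b:ℕ) = l <;> by_cases hb'l : (b':ℕ) = l
      · have e : b = ⟨l, l.lt_succ_self⟩ := Fin.ext hbl
        have e' : b' = ⟨l, l.lt_succ_self⟩ := Fin.ext hb'l
        subst e; subst e'
        simp [ket2_dot, colL]
      · have e : b = ⟨l, l.lt_succ_self⟩ := Fin.ext hbl
        subst e
        simp only [colL, col1 l b' hb'l, sub_eq_add_neg, ← neg_mul, dot_expandR, ket2_dot]
        simp [Prod.ext_iff, Fin.ext_iff, Ne.symm hb'l]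
      · have e' : b' = ⟨l, l.lt_succ_self⟩ := Fin.ext hb'l
        subst e'
        simp only [colL, col1 l b hbl, sub_eq_add_neg, ← neg_mul, dot_expandL, ket2_dot]
        simp [Prod.ext_iff, Fin.ext_iff, hbl]
      · simp only [col1 l b hbl, col1 l b' hb'l, sub_eq_add_neg, ← neg_mul, dot_expand, ket2_dot]
        by_cases hbb : b = b'
        · subst hbb
          simp only [and_self, if_pos rfl, Prod.mk.injEq, Fin.ext_iff]
          norm_num
          have e2 : Real.sqrt ((l:ℝ) + -((b:ℕ):ℝ)) ^ 2 = (l:ℝ) + -((b:ℕ):ℝ) :=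
            Real.sq_sqrt (by linarith)
          have e3 : Real.sqrt ((l:ℝ)+1) ^ 2 = (l:ℝ)+1 := Real.sq_sqrt (by positivity)
          have e4 : Real.sqrt (((b:ℕ):ℝ)+1) ^ 2 = ((b:ℕ):ℝ)+1 := Real.sq_sqrt (by positivity)
          have e2' := hsq ((l:ℝ) + -((b:ℕ):ℝ)) (by linarith)
          have e3' := hsq ((l:ℝ)+1) (by positivity)
          have e4' := hsq (((b:ℕ):ℝ)+1) (by positivity)
          rw [← Complex.ofReal_one]
          simp only [← Complex.ofReal_inv, ← Complex.ofReal_mul, ← Complex.ofReal_add, Complex.ofReal_inj]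
          field_simp
          nlinarith [e2, e3, e4, e2', e3', e4']
        · have hbbn : (b:ℕ) ≠ (b':ℕ) := fun h => hbb (Fin.ext h)
          simp [Prod.ext_iff, Fin.ext_iff, hbbn, show ¬((b:ℕ)+1 = (b':ℕ)+1) by omega]
    · exact absurd hav' (by omega)
  · exact absurd hav (by omega)
def Dfun (l : ℕ) (p : ℝ) : Fin 2 × Fin (l+1) → ℂ := fun y =>
  if y.1 = 1 ∧ (y.2:ℕ) ≠ l then ((lamMinus l p : ℝ) : ℂ) else ((lamPlus l p : ℝ) : ℂ)

set_option maxHeartbeats 1000000 in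
lemma eigU (l : ℕ) (hl : 1 ≤ l) (p : ℝ) (y : Fin 2 × Fin (l+1)) :
    (choiPT (PhiFam l p)).mulVec (fun x => Umat l x y)
      = Dfun l p y • (fun x => Umat l x y) := by
  obtain ⟨a, b⟩ := y
  rcases a with ⟨av, hav⟩
  rcases av with _ | _ | av
  · -- a = 0
    rw [show (⟨0, hav⟩ : Fin 2) = 0 from rfl]
    have hcol : (fun x => Umat l x (0, b)) =
        (((Real.sqrt ((l:ℝ)+1))⁻¹ : ℝ) : ℂ) •
          (((Real.sqrt ((l:ℝ) + 1 - ((b:ℕ):ℝ)) : ℝ) : ℂ) • ket2 l 0 b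
            + ((Real.sqrt (((b:ℕ):ℝ)) : ℝ) : ℂ) • ket2 l 1 ⟨(b:ℕ)-1, by omega⟩) := by
      funext x; rw [col0 l b x]; simp [mul_add]
    have hD : Dfun l p (0, b) = ((lamPlus l p : ℝ) : ℂ) := by simp [Dfun]
    rw [hD, hcol, Matrix.mulVec_smul]
    obtain ⟨bv, hbv⟩ := b
    match bv, hbv with
    | 0, hbv =>
      have h0 : ((⟨0, hbv⟩ : Fin (l+1)) : ℕ) = 0 := rfl
      simp only [h0, Nat.cast_zero, Real.sqrt_zero, Complex.ofReal_zero, zero_smul, add_zero,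
        Nat.zero_sub]
      rw [show (⟨0, hbv⟩ : Fin (l+1)) = 0 from rfl]
      rw [Matrix.mulVec_smul, eig1 l hl p]
      simp only [smul_smul]; congr 1; ring
    | s+1, hbv =>
      have hs : s ≤ l - 1 := by omega
      have h1 : ((⟨s+1, hbv⟩ : Fin (l+1)) : ℕ) = s + 1 := rfl
      rw [show (l:ℝ) + 1 - (((⟨s+1, hbv⟩ : Fin (l+1)) : ℕ):ℝ) = (l:ℝ) - (s:ℝ) by
        rw [h1]; push_cast; ring]
      rw [show ((((⟨s+1, hbv⟩ : Fin (l+1)) : ℕ)):ℝ) = (s:ℝ) + 1 by rw [h1]; push_cast; ring]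
      rw [show (⟨(((⟨s+1, hbv⟩ : Fin (l+1)) : ℕ)) - 1, by omega⟩ : Fin (l+1))
            = ⟨s, by omega⟩ from rfl]
      rw [eig3 l hl p s hs]
      rw [smul_comm]
  · -- a = 1
    rw [show (⟨1, hav⟩ : Fin 2) = 1 from rfl]
    by_cases hbl : (b:ℕ) = l
    · have hb : b = ⟨l, l.lt_succ_self⟩ := Fin.ext hbl
      subst hb
      have hcol : (fun x => Umat l x (1, ⟨l, l.lt_succ_self⟩)) = ket2 l 1 ⟨l, l.lt_succ_self⟩ :=
        funext (colL l)
      rw [hcol, eig2 l hl p]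
      simp [Dfun]
    · have hcol : (fun x => Umat l x (1, b)) =
          (((Real.sqrt ((l:ℝ)+1))⁻¹ : ℝ) : ℂ) •
            (((Real.sqrt (((b:ℕ):ℝ) + 1) : ℝ) : ℂ) • ket2 l 0 ⟨(b:ℕ)+1, by omega⟩
              - ((Real.sqrt ((l:ℝ) - ((b:ℕ):ℝ)) : ℝ) : ℂ) • ket2 l 1 b) := by
        funext x; rw [col1 l b hbl x]; simp [mul_sub]
      have hD : Dfun l p (1, b) = ((lamMinus l p : ℝ) : ℂ) := by simp [Dfun, hbl]
      have hs : (b:ℕ) ≤ l - 1 := by have := b.isLt; omega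
      rw [hD, hcol, Matrix.mulVec_smul]
      rw [show ket2 l 1 b = ket2 l 1 ⟨(b:ℕ), by omega⟩ by congr]
      rw [eig4 l hl p (b:ℕ) hs]
      rw [smul_comm]
  · omega
lemma my_charpoly_conj {n : Type*} [DecidableEq n] [Fintype n]
    (U V M : Matrix n n ℂ) (h : U * V = 1) :
    (U * M * V).charpoly = M.charpoly := by
  have hmap : ∀ (A B : Matrix n n ℂ),
      (A * B).map (Polynomial.C : ℂ →+* Polynomial ℂ) = A.map _ * B.map _ := fun A B => by
    exact Matrix.map_mul
  have hchar : Matrix.charmatrix (U * M * V)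
      = U.map (Polynomial.C : ℂ →+* Polynomial ℂ) * Matrix.charmatrix M
        * V.map (Polynomial.C : ℂ →+* Polynomial ℂ) := by
    rw [Matrix.charmatrix]
    rw [Matrix.charmatrix]
    simp only [RingHom.mapMatrix_apply]
    rw [Matrix.mul_sub, Matrix.sub_mul]
    congr 1
    · rw [Matrix.scalar_apply, ← Matrix.smul_one_eq_diagonal, Matrix.mul_smul, Matrix.mul_one,
        Matrix.smul_mul, ← hmap, h, Matrix.map_one _ (map_zero _) (map_one _)]
    · rw [hmap, hmap]
  have hVU : V * U = 1 := mul_eq_one_comm.mp h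
  rw [Matrix.charpoly, hchar, Matrix.det_mul, Matrix.det_mul, mul_comm, ← mul_assoc,
    ← Matrix.det_mul, ← hmap, hVU, Matrix.map_one _ (map_zero _) (map_one _), Matrix.det_one,
    one_mul]
  rfl

lemma my_charpoly_diag {n : Type*} [DecidableEq n] [Fintype n] (f : n → ℂ) :
    (Matrix.diagonal f).charpoly = ∏ i, (Polynomial.X - Polynomial.C (f i)) := by
  have : Matrix.charmatrix (Matrix.diagonal f)
      = Matrix.diagonal (fun i => Polynomial.X - Polynomial.C (f i)) := by
    ext i j
    by_cases h : i = j
    · subst h; simp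
    · simp [h, Matrix.diagonal_apply_ne _ h]
  rw [Matrix.charpoly, this, Matrix.det_diagonal]
lemma CU (l : ℕ) (hl : 1 ≤ l) (p : ℝ) :
    choiPT (PhiFam l p) * Umat l = Umat l * Matrix.diagonal (Dfun l p) := by
  ext x y
  rw [Matrix.mul_apply, Matrix.mul_diagonal]
  have h := congrFun (eigU l hl p y) x
  simp only [Matrix.mulVec, dotProduct, Pi.smul_apply, smul_eq_mul] at h
  rw [h, mul_comm]

set_option maxHeartbeats 1000000 in
theorem stmt_1' (l : ℕ) (hl : 1 ≤ l) (p : ℝ) :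
    (choiPT (PhiFam l p)).charpoly
        = (Polynomial.X - Polynomial.C ((lamPlus l p : ℝ) : ℂ)) ^ (l + 2)
          * (Polynomial.X - Polynomial.C ((lamMinus l p : ℝ) : ℂ)) ^ l := by
  have hUV : (Umat l)ᵀ * Umat l = 1 := UtU l hl
  have hVU : Umat l * (Umat l)ᵀ = 1 := mul_eq_one_comm.mp hUV
  have hC : choiPT (PhiFam l p) = Umat l * Matrix.diagonal (Dfun l p) * (Umat l)ᵀ := by
    rw [← Matrix.mul_one (choiPT (PhiFam l p)), ← hVU, ← Matrix.mul_assoc, CU l hl p]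
  rw [hC, my_charpoly_conj _ _ _ hVU, my_charpoly_diag]
  rw [Fintype.prod_prod_type]
  rw [Fin.prod_univ_two]
  have h0 : ∀ b : Fin (l+1), Dfun l p ((0 : Fin 2), b) = ((lamPlus l p : ℝ) : ℂ) := by
    intro b; simp [Dfun]
  have h1 : ∀ b : Fin (l+1), Dfun l p ((1 : Fin 2), b)
      = if (b:ℕ) = l then ((lamPlus l p : ℝ) : ℂ) else ((lamMinus l p : ℝ) : ℂ) := by
    intro b
    by_cases hb : (b:ℕ) = l <;> simp [Dfun, hb]
  simp only [h0, h1]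
  rw [Finset.prod_const, Finset.card_univ, Fintype.card_fin]
  rw [Fin.prod_univ_castSucc]
  have h2 : ∀ i : Fin l, ((i.castSucc : Fin (l+1)) : ℕ) ≠ l := by
    intro i; have := i.isLt; simp [Fin.coe_castSucc]; omega
  have h3 : ((Fin.last l : Fin (l+1)) : ℕ) = l := rfl
  simp only [h3, eq_self_iff_true, if_true]
  rw [Finset.prod_congr rfl (fun i _ => by rw [if_neg (h2 i)])]
  rw [Finset.prod_const, Finset.card_univ, Fintype.card_fin]
  ring

/-- eigenvectors and eigenvalues of the partial transpose of the
Choi matrix of `Φ_p`; it has only the eigenvalues `λ₊` (multiplicity `l+2`) and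
`λ₋` (multiplicity `l`), as recorded by its characteristic polynomial. -/
theorem stmt_1 (l : ℕ) (hl : 1 ≤ l) (p : ℝ) :
    (choiPT (PhiFam l p)).mulVec (ket2 l 0 0)
        = ((lamPlus l p : ℝ) : ℂ) • ket2 l 0 0
    ∧ (choiPT (PhiFam l p)).mulVec (ket2 l 1 ⟨l, l.lt_succ_self⟩)
        = ((lamPlus l p : ℝ) : ℂ) • ket2 l 1 ⟨l, l.lt_succ_self⟩
    ∧ (∀ s : ℕ, ∀ hs : s ≤ l - 1,
        (choiPT (PhiFam l p)).mulVec
            (((Real.sqrt (l - s) : ℝ) : ℂ) • ket2 l 0 ⟨s + 1, by omega⟩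
              + ((Real.sqrt (s + 1) : ℝ) : ℂ) • ket2 l 1 ⟨s, by omega⟩)
          = ((lamPlus l p : ℝ) : ℂ) •
            (((Real.sqrt (l - s) : ℝ) : ℂ) • ket2 l 0 ⟨s + 1, by omega⟩
              + ((Real.sqrt (s + 1) : ℝ) : ℂ) • ket2 l 1 ⟨s, by omega⟩))
    ∧ (∀ s : ℕ, ∀ hs : s ≤ l - 1,
        (choiPT (PhiFam l p)).mulVec
            (((Real.sqrt (s + 1) : ℝ) : ℂ) • ket2 l 0 ⟨s + 1, by omega⟩
              - ((Real.sqrt (l - s) : ℝ) : ℂ) • ket2 l 1 ⟨s, by omega⟩)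
          = ((lamMinus l p : ℝ) : ℂ) •
            (((Real.sqrt (s + 1) : ℝ) : ℂ) • ket2 l 0 ⟨s + 1, by omega⟩
              - ((Real.sqrt (l - s) : ℝ) : ℂ) • ket2 l 1 ⟨s, by omega⟩))
    ∧ (choiPT (PhiFam l p)).charpoly
        = (Polynomial.X - Polynomial.C ((lamPlus l p : ℝ) : ℂ)) ^ (l + 2)
          * (Polynomial.X - Polynomial.C ((lamMinus l p : ℝ) : ℂ)) ^ l := by
  exact ⟨eig1 l hl p, eig2 l hl p, eig3 l hl p, eig4 l hl p, stmt_1' l hl p⟩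

end
end

section
/- Let l ≥ 1 be an integer and 0 < p ≤ 1. Then the channel Ψ_p is not degradable: there exists no completely positive trace-preserving map Θ : M₂(ℂ) → M_{2l+2}(ℂ) such that Θ ∘ Ψ_p = Ψ_p^c. -/
open Matrix BigOperators
open scoped Kronecker ComplexOrder

noncomputable section

/-- `Θ` is completely positive if its Choi matrix is positive semidefinite. -/
def IsCP {k n : ℕ} (Θ : Matrix (Fin k) (Fin k) ℂ → Matrix (Fin n) (Fin n) ℂ) : Prop :=
  (choi Θ).PosSemidef

/-- `Θ` is trace-preserving. -/
def IsTP {k n : ℕ} (Θ : Matrix (Fin k) (Fin k) ℂ → Matrix (Fin n) (Fin n) ℂ) : Prop :=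
  ∀ X, (Θ X).trace = X.trace

/-- The Kraus operators `K_i ∈ M_{(l+1)×2}(ℂ)`, `1 ≤ i ≤ 2l+2` (junk value `0` otherwise). -/
def Kop (l i : ℕ) : Matrix (Fin (l+1)) (Fin 2) ℂ :=
  fun r s =>
    if 1 ≤ i ∧ i ≤ l then
      ((Real.sqrt (2 / ((l : ℝ) * ((l : ℝ) + 1))) : ℝ) : ℂ) * (-1 : ℂ) ^ (i - 1) *
        (if (r : ℕ) = l - i ∧ s = 0 then ((Real.sqrt i : ℝ) : ℂ)
         else if (r : ℕ) = l - i + 1 ∧ s = 1 then ((Real.sqrt (l - i + 1) : ℝ) : ℂ)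
         else 0)
    else if l + 1 ≤ i ∧ i ≤ 2 * l + 2 then
      ((Real.sqrt (2 / (((l : ℝ) + 1) * ((l : ℝ) + 2))) : ℝ) : ℂ) * (-1 : ℂ) ^ (i - l - 1) *
        (if (r : ℕ) = l + 1 - (i - l) ∧ s = 0 then ((Real.sqrt (l + 2 - (i - l)) : ℝ) : ℂ)
         else if (r : ℕ) = l + 2 - (i - l) ∧ s = 1 then -((Real.sqrt ((i - l) - 1) : ℝ) : ℂ)
         else 0)
    else 0

/-- `L_i = √((l+1)/2)·K_i*`. -/
def Lop (l i : ℕ) : Matrix (Fin 2) (Fin (l+1)) ℂ :=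
  ((Real.sqrt (((l : ℝ) + 1) / 2) : ℝ) : ℂ) • (Kop l i)ᴴ

/-- `Ψ_p = (1-p)Φ^{l→1}_{l-1} + pΦ^{l→1}_{l+1}` given by the Kraus operators `L_i`. -/
def PsiFam (l : ℕ) (p : ℝ) (Y : Matrix (Fin (l+1)) (Fin (l+1)) ℂ) :
    Matrix (Fin 2) (Fin 2) ℂ :=
  ((1 - p : ℝ) : ℂ) • ∑ i ∈ Finset.Icc 1 l, Lop l i * Y * (Lop l i)ᴴ
    + ((p : ℝ) : ℂ) • ∑ i ∈ Finset.Icc (l + 1) (2 * l + 2), Lop l i * Y * (Lop l i)ᴴ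

/-- Weighted Kraus operators `M_i` of `Ψ_p`: `M_i = √(1-p)·L_i` for `1 ≤ i ≤ l`
and `M_i = √p·L_i` for `l+1 ≤ i ≤ 2l+2`. -/
def MkerL (l : ℕ) (p : ℝ) (i : ℕ) : Matrix (Fin 2) (Fin (l+1)) ℂ :=
  if i ≤ l then ((Real.sqrt (1 - p) : ℝ) : ℂ) • Lop l i
  else ((Real.sqrt p : ℝ) : ℂ) • Lop l i

/-- The complementary channel `Ψ_p^c(Y) = [Tr(M_i Y M_j*)]_{i,j=1}^{2l+2}`. -/
def PsiComp (l : ℕ) (p : ℝ) (Y : Matrix (Fin (l+1)) (Fin (l+1)) ℂ) :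
    Matrix (Fin (2 * l + 2)) (Fin (2 * l + 2)) ℂ :=
  fun i j => (MkerL l p ((i : ℕ) + 1) * Y * (MkerL l p ((j : ℕ) + 1))ᴴ).trace

lemma entry_ABE {n : ℕ} (A B : Matrix (Fin 2) (Fin n) ℂ) (r0 r2 : Fin n) (a b : Fin 2) :
    (A * Matrix.single r0 r2 (1:ℂ) * Bᴴ) a b
      = A a r0 * (starRingEnd ℂ) (B b r2) := by
  simp [Matrix.mul_apply, Matrix.single, Matrix.conjTranspose_apply, Finset.mul_sum,
    Finset.sum_ite_eq, ite_and, mul_ite]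

lemma trace_ABE {n : ℕ} (A B : Matrix (Fin 2) (Fin n) ℂ) (r0 r2 : Fin n) :
    (A * Matrix.single r0 r2 (1:ℂ) * Bᴴ).trace
      = A 0 r0 * (starRingEnd ℂ) (B 0 r2) + A 1 r0 * (starRingEnd ℂ) (B 1 r2) := by
  rw [Matrix.trace, Fin.sum_univ_two]
  simp [Matrix.diag, entry_ABE]

lemma diag_nonneg' {n : Type*} [Fintype n] [DecidableEq n] {M : Matrix n n ℂ}
    (h : M.PosSemidef) (i : n) :
    0 ≤ M i i := by
  exact h.diag_nonneg

lemma kop_col (l i : ℕ) (hl : 2 ≤ l) (h0 : 0 < l + 1) (h2 : 2 < l + 1) :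
    (∀ a : Fin 2, Kop l i ⟨0, h0⟩ a = 0) ∨ (∀ b : Fin 2, Kop l i ⟨2, h2⟩ b = 0) := by
  by_cases hc : i = l ∨ 2*l+1 ≤ i
  · right
    intro b
    simp only [Kop]
    split_ifs <;>
      first
      | (rename_i hcond
         exfalso
         rcases hcond with ⟨h1, h2⟩
         first
         | exact h1
         | (try simp only [Fin.val_mk] at h1
            omega))
      | simp
  · left
    intro a
    simp only [Kop]
    split_ifs <;>
      first
      | (rename_i hcond
         exfalso
         rcases hcond with ⟨h1, h2⟩
         first
         | exact h1
         | (try simp only [Fin.val_mk] at h1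
            omega))
      | simp

lemma psiFam_E_zero (l : ℕ) (hl : 2 ≤ l) (p : ℝ) (h0 : 0 < l + 1) (h2 : 2 < l + 1) :
    PsiFam l p (Matrix.single ⟨0, h0⟩ ⟨2, h2⟩ (1:ℂ)) = 0 := by
  have key : ∀ i : ℕ,
      Lop l i * Matrix.single (⟨0, h0⟩ : Fin (l+1)) (⟨2, h2⟩ : Fin (l+1)) (1:ℂ) * (Lop l i)ᴴ = 0 := by
    intro i
    ext a b
    rw [entry_ABE]
    rcases kop_col l i hl h0 h2 with h | h
    · have hz : Lop l i a ⟨0, h0⟩ = 0 := by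
        simp only [Lop, Matrix.smul_apply, Matrix.conjTranspose_apply, h a, star_zero, smul_zero]
      rw [hz, zero_mul]
      simp
    · have hz : Lop l i b ⟨2, h2⟩ = 0 := by
        simp only [Lop, Matrix.smul_apply, Matrix.conjTranspose_apply, h b, star_zero, smul_zero]
      rw [hz, map_zero, mul_zero]
      simp
  unfold PsiFam
  rw [Finset.sum_eq_zero (fun i _ => key i), Finset.sum_eq_zero (fun i _ => key i)]
  simp

lemma mker_entry (l : ℕ) (p : ℝ) (i : ℕ) (hi : l < i) (a : Fin 2) (r : Fin (l+1)) :
    MkerL l p i a r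
      = (↑(Real.sqrt p) : ℂ) * ((↑(Real.sqrt (((l:ℝ)+1)/2)) : ℂ) * star (Kop l i r a)) := by
  rw [MkerL, if_neg (by omega)]
  simp [Lop, Matrix.smul_apply, Matrix.conjTranspose_apply, mul_assoc]

lemma kop_ne1 (l : ℕ) (hl : 2 ≤ l) (h0 : 0 < l + 1) :
    Kop l (2*l+1) ⟨0, h0⟩ 0 ≠ 0 := by
  have e1 : ¬(1 ≤ 2*l+1 ∧ 2*l+1 ≤ l) := by omega
  have e2 : l+1 ≤ 2*l+1 ∧ 2*l+1 ≤ 2*l+2 := by omega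
  have e3 : ((⟨0, h0⟩ : Fin (l+1)) : ℕ) = l+1 - (2*l+1-l) ∧ (0 : Fin 2) = 0 :=
    ⟨by simp only [Fin.val_mk]; omega, rfl⟩
  simp only [Kop, if_neg e1, if_pos e2]
  split_ifs with hc1 hc2
  · apply mul_ne_zero (mul_ne_zero ?_ ?_) ?_
    · apply Complex.ofReal_ne_zero.2
      rw [Real.sqrt_ne_zero']
      positivity
    · exact pow_ne_zero _ (by norm_num)
    · apply Complex.ofReal_ne_zero.2
      rw [Real.sqrt_ne_zero']
      push_cast
      linarith [(by positivity : (0:ℝ) ≤ (l:ℝ))]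
  · exact absurd hc2.1 (by omega)
  · exact (hc1 ⟨by omega, trivial⟩).elim

lemma kop_ne2 (l : ℕ) (hl : 2 ≤ l) (h2 : 2 < l + 1) :
    Kop l (2*l-2+1) ⟨2, h2⟩ 0 ≠ 0 := by
  have e1 : ¬(1 ≤ 2*l-2+1 ∧ 2*l-2+1 ≤ l) := by omega
  have e2 : l+1 ≤ 2*l-2+1 ∧ 2*l-2+1 ≤ 2*l+2 := by omega
  have e3 : ((⟨2, h2⟩ : Fin (l+1)) : ℕ) = l+1 - (2*l-2+1-l) ∧ (0 : Fin 2) = 0 :=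
    ⟨by simp only [Fin.val_mk]; omega, rfl⟩
  have ecast : (((2*l-2+1 : ℕ)) : ℝ) = 2*(l:ℝ) - 1 := by
    push_cast [Nat.cast_sub (by omega : 2 ≤ 2*l)]
    ring
  simp only [Kop, if_neg e1, if_pos e2]
  split_ifs with hc1 hc2
  · apply mul_ne_zero (mul_ne_zero ?_ ?_) ?_
    · apply Complex.ofReal_ne_zero.2
      rw [Real.sqrt_ne_zero']
      positivity
    · exact pow_ne_zero _ (by norm_num)
    · apply Complex.ofReal_ne_zero.2
      rw [Real.sqrt_ne_zero', ecast]
      push_cast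
      linarith [(by positivity : (0:ℝ) ≤ (l:ℝ))]
  · exact absurd hc2.1 (by omega)
  · exact (hc1 ⟨by omega, trivial⟩).elim

lemma kop_z1 (l : ℕ) (hl : 2 ≤ l) (h0 : 0 < l + 1) :
    Kop l (2*l+1) ⟨0, h0⟩ 1 = 0 := by
  have e1 : ¬(1 ≤ 2*l+1 ∧ 2*l+1 ≤ l) := by omega
  have e2 : l+1 ≤ 2*l+1 ∧ 2*l+1 ≤ 2*l+2 := by omega
  have c1 : ¬(((⟨0, h0⟩ : Fin (l+1)) : ℕ) = l+1 - (2*l+1-l) ∧ (1 : Fin 2) = 0) :=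
    fun h => absurd h.2 (by decide)
  have c2 : ¬(((⟨0, h0⟩ : Fin (l+1)) : ℕ) = l+2 - (2*l+1-l) ∧ (1 : Fin 2) = 1) := by
    rintro ⟨h, -⟩
    simp only [Fin.val_mk] at h
    omega
  simp only [Kop, if_neg e1, if_pos e2]
  split_ifs with hc1 hc2 <;>
    first
    | (exfalso; first | exact c1 hc1 | exact c2 ⟨hc1.1, rfl⟩ | exact absurd hc2.1 (by omega))
    | simp

lemma case_ge2 (l : ℕ) (hl : 2 ≤ l) (p : ℝ) (hp0 : 0 < p)
    (Θ : Matrix (Fin 2) (Fin 2) ℂ →ₗ[ℂ] Matrix (Fin (2*l+2)) (Fin (2*l+2)) ℂ)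
    (hInt : ∀ Y, Θ (PsiFam l p Y) = PsiComp l p Y) : False := by
  have h0 : 0 < l + 1 := by omega
  have h2 : 2 < l + 1 := by omega
  have h1 := hInt (Matrix.single ⟨0, h0⟩ ⟨2, h2⟩ 1)
  rw [psiFam_E_zero l hl p h0 h2, map_zero] at h1
  have h3 := congrFun (congrFun h1 (⟨2*l, by omega⟩ : Fin (2*l+2))) (⟨2*l-2, by omega⟩ : Fin (2*l+2))
  simp only [PsiComp, Fin.val_mk, Matrix.zero_apply] at h3
  rw [trace_ABE] at h3
  rw [mker_entry l p (2*l+1) (by omega), mker_entry l p (2*l+1) (by omega),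
      mker_entry l p (2*l-2+1) (by omega), mker_entry l p (2*l-2+1) (by omega),
      kop_z1 l hl h0] at h3
  simp only [star_zero, mul_zero, zero_mul, map_zero, add_zero] at h3
  have hsp : ((Real.sqrt p : ℝ) : ℂ) ≠ 0 :=
    Complex.ofReal_ne_zero.2 (Real.sqrt_ne_zero'.2 hp0)
  have hs2 : ((Real.sqrt (((l:ℝ)+1)/2) : ℝ) : ℂ) ≠ 0 := by
    apply Complex.ofReal_ne_zero.2
    rw [Real.sqrt_ne_zero']
    positivity
  have hne : ((Real.sqrt p : ℝ) : ℂ) * (((Real.sqrt (((l:ℝ)+1)/2) : ℝ) : ℂ)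
        * star (Kop l (2*l+1) ⟨0, h0⟩ 0))
      * (starRingEnd ℂ) (((Real.sqrt p : ℝ) : ℂ) * (((Real.sqrt (((l:ℝ)+1)/2) : ℝ) : ℂ)
        * star (Kop l (2*l-2+1) ⟨2, h2⟩ 0))) ≠ 0 := by
    apply mul_ne_zero
    · exact mul_ne_zero hsp (mul_ne_zero hs2 (star_ne_zero.2 (kop_ne1 l hl h0)))
    · rw [starRingEnd_apply]
      exact star_ne_zero.2
        (mul_ne_zero hsp (mul_ne_zero hs2 (star_ne_zero.2 (kop_ne2 l hl h2))))
  exact hne h3.symm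

lemma lop11 : Lop 1 1 = 1 := by
  ext a r
  fin_cases a <;> fin_cases r <;>
    simp [Lop, Kop] <;> norm_num

lemma sqrt2C_ne : ((Real.sqrt 2 : ℝ) : ℂ) ≠ 0 :=
  Complex.ofReal_ne_zero.2 (Real.sqrt_ne_zero'.2 (by norm_num))

lemma sqrt3C_ne : ((Real.sqrt 3 : ℝ) : ℂ) ≠ 0 :=
  Complex.ofReal_ne_zero.2 (Real.sqrt_ne_zero'.2 (by norm_num))

lemma lop12 : Lop 1 2 = (↑(Real.sqrt (2/3)) : ℂ) • Matrix.single 0 1 1 := by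
  have h2 := sqrt2C_ne
  have h3 := sqrt3C_ne
  ext a r
  fin_cases a <;> fin_cases r <;>
    simp [Lop, Kop, Matrix.single] <;> norm_num <;> field_simp <;> ring

lemma lop13 : Lop 1 3
    = (↑(Real.sqrt (1/3)) : ℂ) • (Matrix.single 1 1 1 - Matrix.single 0 0 1) := by
  have h2 := sqrt2C_ne
  have h3 := sqrt3C_ne
  ext a r
  fin_cases a <;> fin_cases r <;>
    simp [Lop, Kop, Matrix.single] <;> norm_num <;> field_simp <;> ring

lemma lop14 : Lop 1 4 = -((↑(Real.sqrt (2/3)) : ℂ) • Matrix.single 1 0 1) := by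
  have h2 := sqrt2C_ne
  have h3 := sqrt3C_ne
  ext a r
  fin_cases a <;> fin_cases r <;>
    simp [Lop, Kop, Matrix.single] <;> norm_num <;> field_simp <;> ring

lemma csq2 : ((Real.sqrt 2 : ℝ) : ℂ)^2 = 2 := by
  rw [sq, ← Complex.ofReal_mul, Real.mul_self_sqrt (by norm_num)]
  norm_num

lemma csq3 : ((Real.sqrt 3 : ℝ) : ℂ)^2 = 3 := by
  rw [sq, ← Complex.ofReal_mul, Real.mul_self_sqrt (by norm_num)]
  norm_num

lemma csq3inv : (((Real.sqrt 3 : ℝ) : ℂ))⁻¹^2 = 1/3 := by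
  rw [inv_pow, csq3]
  norm_num

lemma csq23 : ((Real.sqrt (2/3) : ℝ) : ℂ)^2 = 2/3 := by
  rw [sq, ← Complex.ofReal_mul, Real.mul_self_sqrt (by norm_num)]
  norm_num

lemma csq13 : ((Real.sqrt (1/3) : ℝ) : ℂ)^2 = 1/3 := by
  rw [sq, ← Complex.ofReal_mul, Real.mul_self_sqrt (by norm_num)]
  norm_num

lemma csqp (p : ℝ) (hp : 0 ≤ p) : ((Real.sqrt p : ℝ) : ℂ)^2 = ((p:ℝ):ℂ) := by
  rw [sq, ← Complex.ofReal_mul, Real.mul_self_sqrt hp]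

lemma sq23 : ((Real.sqrt (2/3) : ℝ) : ℂ) * ((Real.sqrt (2/3) : ℝ) : ℂ) = (2/3 : ℂ) := by
  rw [← Complex.ofReal_mul, Real.mul_self_sqrt (by norm_num)]
  norm_num

lemma sq13 : ((Real.sqrt (1/3) : ℝ) : ℂ) * ((Real.sqrt (1/3) : ℝ) : ℂ) = (1/3 : ℂ) := by
  rw [← Complex.ofReal_mul, Real.mul_self_sqrt (by norm_num)]
  norm_num

def Ytst (p : ℝ) : Matrix (Fin (1+1)) (Fin (1+1)) ℂ :=
  ((3-2*p : ℝ) : ℂ) • Matrix.single 0 0 1 + ((-2*p : ℝ) : ℂ) • Matrix.single 1 1 1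

lemma psi1 (p : ℝ) :
    PsiFam 1 p (Ytst p) = ((3-4*p : ℝ) : ℂ) • Matrix.single 0 0 1 := by
  rw [PsiFam]
  rw [show Finset.Icc 1 1 = ({1} : Finset ℕ) from Finset.Icc_self 1,
      show Finset.Icc (1+1) (2*1+2) = ({2,3,4} : Finset ℕ) from by decide]
  rw [Finset.sum_singleton, Finset.sum_insert (by decide), Finset.sum_insert (by decide),
      Finset.sum_singleton]
  rw [lop11, lop12, lop13, lop14]
  ext x y
  fin_cases x <;> fin_cases y <;>
    simp [Ytst, Matrix.mul_apply, Matrix.conjTranspose_apply, Matrix.single,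
      Fin.sum_univ_two, Matrix.smul_apply, Matrix.add_apply, Matrix.sub_apply,
      Matrix.one_apply, smul_eq_mul, Complex.conj_ofReal, _root_.map_mul, map_sub, map_neg]
  all_goals
    push_cast
    ring_nf
    simp only [csq2, csq3inv, csq23, csq13]
    ring_nf

lemma pc11 (p : ℝ) (hp : 0 ≤ p) :
    PsiComp 1 p (Ytst p) (1 : Fin (2*1+2)) (1 : Fin (2*1+2)) = ((-(4/3)*p^2 : ℝ) : ℂ) := by
  have hsp : ((Real.sqrt p : ℝ) : ℂ) * ((Real.sqrt p : ℝ) : ℂ) = ((p : ℝ) : ℂ) := by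
    rw [← Complex.ofReal_mul, Real.mul_self_sqrt hp]
  rw [show PsiComp 1 p (Ytst p) (1 : Fin (2*1+2)) (1 : Fin (2*1+2))
        = (MkerL 1 p 2 * Ytst p * (MkerL 1 p 2)ᴴ).trace from rfl]
  rw [show MkerL 1 p 2 = ((Real.sqrt p : ℝ) : ℂ) • Lop 1 2 from by rw [MkerL, if_neg (by norm_num)]]
  rw [lop12]
  simp [Ytst, Matrix.trace, Matrix.diag, Matrix.mul_apply, Matrix.conjTranspose_apply,
    Matrix.single, Fin.sum_univ_two, Matrix.smul_apply, Matrix.add_apply,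
    smul_eq_mul, Complex.conj_ofReal, _root_.map_mul]
  push_cast
  ring_nf
  simp only [csq2, csq3inv, csq23, csq13, csqp p hp]
  ring_nf

lemma pc33 (p : ℝ) (hp : 0 ≤ p) :
    PsiComp 1 p (Ytst p) (3 : Fin (2*1+2)) (3 : Fin (2*1+2)) = ((2/3*p*(3-2*p) : ℝ) : ℂ) := by
  have hsp : ((Real.sqrt p : ℝ) : ℂ) * ((Real.sqrt p : ℝ) : ℂ) = ((p : ℝ) : ℂ) := by
    rw [← Complex.ofReal_mul, Real.mul_self_sqrt hp]
  rw [show PsiComp 1 p (Ytst p) (3 : Fin (2*1+2)) (3 : Fin (2*1+2))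
        = (MkerL 1 p 4 * Ytst p * (MkerL 1 p 4)ᴴ).trace from rfl]
  rw [show MkerL 1 p 4 = ((Real.sqrt p : ℝ) : ℂ) • Lop 1 4 from by rw [MkerL, if_neg (by norm_num)]]
  rw [lop14]
  simp [Ytst, Matrix.trace, Matrix.diag, Matrix.mul_apply, Matrix.conjTranspose_apply,
    Matrix.single, Fin.sum_univ_two, Matrix.smul_apply, Matrix.add_apply,
    smul_eq_mul, Complex.conj_ofReal, _root_.map_mul, map_neg]
  push_cast
  ring_nf
  simp only [csq2, csq3inv, csq23, csq13, csqp p hp]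
  ring_nf


/-- for `l ≥ 1` and `0 < p ≤ 1`, the channel `Ψ_p` is not degradable. -/
theorem stmt_6 (l : ℕ) (hl : 1 ≤ l) (p : ℝ) (hp0 : 0 < p) (hp1 : p ≤ 1) :
    ¬ ∃ Θ : Matrix (Fin 2) (Fin 2) ℂ →ₗ[ℂ] Matrix (Fin (2*l+2)) (Fin (2*l+2)) ℂ,
        IsCP (⇑Θ) ∧ IsTP (⇑Θ) ∧ ∀ Y, Θ (PsiFam l p Y) = PsiComp l p Y := by

  rintro ⟨Θ, hCP, hTP, hInt⟩
  rcases Nat.lt_or_ge l 2 with hl2 | hl2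
  · obtain rfl : l = 1 := by omega
    have hd1 : 0 ≤ choi (⇑Θ) ((0 : Fin 2), (1 : Fin (2*1+2))) ((0 : Fin 2), (1 : Fin (2*1+2))) :=
      diag_nonneg' hCP _
    have hd3 : 0 ≤ choi (⇑Θ) ((0 : Fin 2), (3 : Fin (2*1+2))) ((0 : Fin 2), (3 : Fin (2*1+2))) :=
      diag_nonneg' hCP _
    simp only [choi] at hd1 hd3
    have h1 := hInt (Ytst p)
    rw [psi1, _root_.map_smul] at h1
    have e1 := congrFun (congrFun h1 (1 : Fin (2*1+2))) (1 : Fin (2*1+2))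
    have e3 := congrFun (congrFun h1 (3 : Fin (2*1+2))) (3 : Fin (2*1+2))
    rw [pc11 p hp0.le] at e1
    rw [pc33 p hp0.le] at e3
    simp only [Matrix.smul_apply, smul_eq_mul] at e1 e3
    obtain ⟨hr1, hi1⟩ := Complex.nonneg_iff.mp hd1
    obtain ⟨hr3, hi3⟩ := Complex.nonneg_iff.mp hd3
    have r1 : (3-4*p) * (Θ (Matrix.single 0 0 1) 1 1).re = -(4/3)*p^2 := by
      have := congrArg Complex.re e1
      simpa [Complex.mul_re, Complex.ofReal_re, Complex.ofReal_im, ← Complex.ofReal_pow, ← hi1] using this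
    have r3 : (3-4*p) * (Θ (Matrix.single 0 0 1) 3 3).re = 2/3*p*(3-2*p) := by
      have := congrArg Complex.re e3
      simpa [Complex.mul_re, Complex.ofReal_re, Complex.ofReal_im, ← Complex.ofReal_pow, ← hi3] using this
    have key : ((3-4*p) * (Θ (Matrix.single 0 0 1) 1 1).re)
          * ((3-4*p) * (Θ (Matrix.single 0 0 1) 3 3).re)
        = (-(4/3)*p^2) * (2/3*p*(3-2*p)) := by
      rw [r1, r3]
    nlinarith [mul_nonneg hr1 hr3, sq_nonneg (3-4*p), key,
      mul_pos (mul_pos hp0 hp0) hp0, hp1]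
  · exact case_ge2 l hl2 p hp0 Θ hInt


end
end

section
/- Let l ≥ 1 be an integer and p ∈ ℝ. The linear map Φ_p = (1−p)Φ⁻ + pΦ⁺ is positive if and only if 0 ≤ p ≤ (l+2)/(l+1), and Φ_p is decomposable if and only if 0 ≤ p ≤ (l+2)/(l+1). -/
open Matrix BigOperators
open scoped Kronecker ComplexOrder

noncomputable section

/-- `Θ` is a positive map: it sends positive semidefinite matrices to positive
semidefinite matrices. -/
def IsPosMap {k n : ℕ} (Θ : Matrix (Fin k) (Fin k) ℂ → Matrix (Fin n) (Fin n) ℂ) : Prop :=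
  ∀ X, X.PosSemidef → (Θ X).PosSemidef

/-- `Θ` is completely co-positive if `X ↦ Θ(Xᵗ)` is completely positive. -/
def IsCoCP {k n : ℕ} (Θ : Matrix (Fin k) (Fin k) ℂ → Matrix (Fin n) (Fin n) ℂ) : Prop :=
  IsCP (fun X => Θ Xᵀ)

/-- `Θ` is decomposable if it is the sum of a completely positive linear map and a
completely co-positive linear map. -/
def IsDecomposable {k n : ℕ}
    (Θ : Matrix (Fin k) (Fin k) ℂ → Matrix (Fin n) (Fin n) ℂ) : Prop :=
  ∃ (Θ₁ Θ₂ : Matrix (Fin k) (Fin k) ℂ →ₗ[ℂ] Matrix (Fin n) (Fin n) ℂ),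
    IsCP (⇑Θ₁) ∧ IsCoCP (⇑Θ₂) ∧ ∀ X, Θ X = Θ₁ X + Θ₂ X


section Aux

-- ====== generic helper sums ======
lemma sum_if_eq {m t : ℕ} (z : ℂ) :
    ∑ u : Fin m, (if t = (u:ℕ) then z else 0) = if t < m then z else 0 := by
  rw [Fin.sum_univ_eq_sum_range (fun u => if t = u then z else 0) m,
    Finset.sum_ite_eq]
  simp [Finset.mem_range]

lemma sum_if_eq' {m t : ℕ} (z : ℂ) :
    ∑ u : Fin m, (if (u:ℕ) = t then z else 0) = if t < m then z else 0 := by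
  rw [Fin.sum_univ_eq_sum_range (fun u => if u = t then z else 0) m,
    Finset.sum_ite_eq']
  simp [Finset.mem_range]

lemma sum_if_eq_succ {m t : ℕ} (z : ℂ) :
    ∑ u : Fin m, (if t = (u:ℕ) + 1 then z else 0) =
      if 1 ≤ t ∧ t ≤ m then z else 0 := by
  match t with
  | 0 => simp
  | s+1 =>
    rw [Fin.sum_univ_eq_sum_range (fun u => if s + 1 = u + 1 then z else 0) m]
    simp only [Nat.add_right_cancel_iff]
    rw [Finset.sum_ite_eq]
    simp only [Finset.mem_range]
    split_ifs with h1 h2 <;> first | rfl | omega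

-- ====== CP (Choi PSD) implies positivity ======
lemma linear_apply_eq {k n : ℕ} (Θ : Matrix (Fin k) (Fin k) ℂ →ₗ[ℂ] Matrix (Fin n) (Fin n) ℂ)
    (X : Matrix (Fin k) (Fin k) ℂ) (a b : Fin n) :
    Θ X a b = ∑ i : Fin k, ∑ j : Fin k, X i j * choi (⇑Θ) (i, a) (j, b) := by
  conv_lhs => rw [matrix_eq_sum_single X]
  rw [map_sum, Matrix.sum_apply]
  refine Finset.sum_congr rfl fun i _ => ?_
  rw [map_sum, Matrix.sum_apply]
  refine Finset.sum_congr rfl fun j _ => ?_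
  have h1 : Matrix.single i j (X i j) = X i j • Matrix.single i j (1:ℂ) := by
    rw [smul_single, smul_eq_mul, mul_one]
  rw [h1, _root_.map_smul, Matrix.smul_apply, smul_eq_mul]
  rfl

lemma genPos {k n : ℕ} (Θ : Matrix (Fin k) (Fin k) ℂ →ₗ[ℂ] Matrix (Fin n) (Fin n) ℂ)
    (h : (choi ⇑Θ).PosSemidef) : IsPosMap ⇑Θ := by
  intro X hX
  obtain ⟨B, hB⟩ : ∃ B : Matrix (Fin k) (Fin k) ℂ, X = Bᴴ * B := by
    open scoped MatrixOrder in exact CStarAlgebra.nonneg_iff_eq_star_mul_self.mp hX.nonneg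
  set W : Fin k → Matrix (Fin k × Fin n) (Fin n) ℂ :=
    fun t x a => B t x.1 * (if x.2 = a then 1 else 0) with hW
  have key : Θ X = ∑ t : Fin k, (W t)ᴴ * choi ⇑Θ * W t := by
    ext a b
    rw [Matrix.sum_apply]
    have expand : ∀ t : Fin k, ((W t)ᴴ * choi ⇑Θ * W t) a b
        = ∑ i : Fin k, ∑ j : Fin k, (star (B t i) * B t j) * choi (⇑Θ) (i, a) (j, b) := by
      intro t
      simp only [Matrix.mul_apply, conjTranspose_apply]
      simp only [Matrix.mul_apply, conjTranspose_apply, hW, Fintype.sum_prod_type,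
        apply_ite (star : ℂ → ℂ), star_mul', star_one, star_zero, mul_ite, ite_mul, mul_one,
        mul_zero, zero_mul, one_mul, Finset.sum_ite_eq, Finset.sum_ite_eq', Finset.mem_univ,
        if_true, Finset.sum_mul, Finset.mul_sum]
      rw [Finset.sum_comm]
      refine Finset.sum_congr rfl fun i _ => Finset.sum_congr rfl fun j _ => ?_
      ring
    rw [Finset.sum_congr rfl fun t _ => expand t, linear_apply_eq Θ X a b]
    conv_rhs => rw [Finset.sum_comm]
    refine Finset.sum_congr rfl fun i _ => ?_
    conv_rhs => rw [Finset.sum_comm]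
    refine Finset.sum_congr rfl fun j _ => ?_
    rw [hB, Matrix.mul_apply, Finset.sum_mul]
    exact Finset.sum_congr rfl fun t _ => by simp [conjTranspose_apply]
  rw [key]
  exact Finset.sum_induction _ _ (fun a b ha hb => ha.add hb) .zero
    (fun t _ => h.conjTranspose_mul_mul_same _)

-- ====== linear map structures ======
def PhiMLM (l : ℕ) : Matrix (Fin 2) (Fin 2) ℂ →ₗ[ℂ] Matrix (Fin (l+1)) (Fin (l+1)) ℂ where
  toFun := PhiM l
  map_add' X Y := by
    ext i j
    simp only [PhiM, Matrix.add_apply]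
    split_ifs <;> ring
  map_smul' c X := by
    ext i j
    simp only [PhiM, Matrix.smul_apply, smul_eq_mul, RingHom.id_apply]
    split_ifs <;> ring

def PhiPLM (l : ℕ) : Matrix (Fin 2) (Fin 2) ℂ →ₗ[ℂ] Matrix (Fin (l+1)) (Fin (l+1)) ℂ where
  toFun := PhiP l
  map_add' X Y := by
    ext i j
    simp only [PhiP, Matrix.add_apply]
    split_ifs <;> ring
  map_smul' c X := by
    ext i j
    simp only [PhiP, Matrix.smul_apply, smul_eq_mul, RingHom.id_apply]
    split_ifs <;> ring

def PhiFamLM (l : ℕ) (p : ℝ) : Matrix (Fin 2) (Fin 2) ℂ →ₗ[ℂ] Matrix (Fin (l+1)) (Fin (l+1)) ℂ :=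
  ((1 - p : ℝ) : ℂ) • PhiMLM l + ((p : ℝ) : ℂ) • PhiPLM l

lemma PhiFamLM_coe (l : ℕ) (p : ℝ) : ⇑(PhiFamLM l p) = PhiFam l p := by
  funext X
  simp [PhiFamLM, PhiFam, PhiMLM, PhiPLM]

lemma smulPSD {m : Type*} [Fintype m] {s : ℝ} (hs : 0 ≤ s) {M : Matrix m m ℂ}
    (hM : M.PosSemidef) : ((s:ℂ) • M).PosSemidef := by
  rw [posSemidef_iff_dotProduct_mulVec]
  constructor
  · unfold Matrix.IsHermitian
    rw [conjTranspose_smul, hM.1]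
    congr 1
    simp
  · intro x
    rw [smul_mulVec, dotProduct_smul, smul_eq_mul]
    exact mul_nonneg (Complex.zero_le_real.mpr hs) (hM.dotProduct_mulVec_nonneg x)

lemma choi_smul {k n : ℕ} (c : ℂ) (Θ : Matrix (Fin k) (Fin k) ℂ →ₗ[ℂ] Matrix (Fin n) (Fin n) ℂ) :
    choi ⇑(c • Θ) = c • choi ⇑Θ := by
  ext x y
  simp [choi]

lemma stdBasis_transpose {k : ℕ} (i j : Fin k) :
    (Matrix.single i j (1:ℂ))ᵀ = Matrix.single j i 1 := by
  ext a b
  simp only [Matrix.transpose_apply, Matrix.single, Matrix.of_apply]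
  exact if_congr and_comm rfl rfl

lemma choi_of_transpose {k n : ℕ} (Θ : Matrix (Fin k) (Fin k) ℂ → Matrix (Fin n) (Fin n) ℂ) :
    choi (fun X => Θ Xᵀ) = (choiPT Θ)ᵀ := by
  ext x y
  simp only [choi, choiPT, Matrix.transpose_apply, stdBasis_transpose]

end Aux

section ChoiComputations

set_option maxHeartbeats 1600000

def Bm (l : ℕ) : Matrix (Fin l) (Fin 2 × Fin (l+1)) ℂ :=
  fun u x =>
    if x.1 = 0 ∧ (x.2 : ℕ) = (u : ℕ) then
      ((Real.sqrt (2 / ((l:ℝ)*((l:ℝ)+1))) * Real.sqrt ((l:ℝ) - (u:ℕ)) : ℝ) : ℂ)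
    else if x.1 = 1 ∧ (x.2 : ℕ) = (u : ℕ) + 1 then
      ((Real.sqrt (2 / ((l:ℝ)*((l:ℝ)+1))) * Real.sqrt (((u:ℕ):ℝ) + 1) : ℝ) : ℂ)
    else 0

lemma choiM_eq (l : ℕ) (hl : 1 ≤ l) : choi (PhiM l) = (Bm l)ᴴ * Bm l := by
  have hc : (0:ℝ) ≤ 2 / ((l:ℝ)*((l:ℝ)+1)) := by positivity
  ext ⟨s, a⟩ ⟨t, b⟩
  rw [Matrix.mul_apply]
  simp only [conjTranspose_apply]
  fin_cases s <;> fin_cases t <;>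
    simp only [choi, PhiM, Bm, Matrix.single, Matrix.of_apply] <;>
    simp only [show ((⟨0, by omega⟩ : Fin 2) = 0) = True by simp, show ((⟨0, by omega⟩ : Fin 2) = 1) = False by simp,
      show ((⟨1, by omega⟩ : Fin 2) = 0) = False by simp, show ((⟨1, by omega⟩ : Fin 2) = 1) = True by simp,
      and_true, and_false, true_and, false_and, if_true, if_false, ite_true, ite_false,
      mul_one, mul_zero, add_zero, zero_add] <;>
    simp only [apply_ite (star : ℂ → ℂ), star_zero, Complex.star_def, Complex.conj_ofReal]
  · -- case (0,0)
    by_cases hab : (a:ℕ) = (b:ℕ)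
    · rw [if_pos hab]
      have hle : ((a:ℕ):ℝ) ≤ (l:ℝ) := by exact_mod_cast Nat.lt_succ_iff.mp a.isLt
      have e : ∀ x : Fin l,
          (if (a:ℕ) = (x:ℕ) then ((Real.sqrt (2/((l:ℝ)*((l:ℝ)+1))) * Real.sqrt ((l:ℝ) - ((x:ℕ):ℝ)) : ℝ) : ℂ) else 0) *
          (if (b:ℕ) = (x:ℕ) then ((Real.sqrt (2/((l:ℝ)*((l:ℝ)+1))) * Real.sqrt ((l:ℝ) - ((x:ℕ):ℝ)) : ℝ) : ℂ) else 0) =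
          (if (a:ℕ) = (x:ℕ) then ((2/((l:ℝ)*((l:ℝ)+1)) * ((l:ℝ) - ((a:ℕ):ℝ)) : ℝ) : ℂ) else 0) := by
        intro x
        split_ifs with h1 h2
        · rw [← h1, ← Complex.ofReal_mul]
          congr 1
          rw [show (Real.sqrt (2/((l:ℝ)*((l:ℝ)+1))) * Real.sqrt ((l:ℝ) - ((a:ℕ):ℝ))) *
              (Real.sqrt (2/((l:ℝ)*((l:ℝ)+1))) * Real.sqrt ((l:ℝ) - ((a:ℕ):ℝ)))
              = (Real.sqrt (2/((l:ℝ)*((l:ℝ)+1))) * Real.sqrt (2/((l:ℝ)*((l:ℝ)+1)))) *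
                (Real.sqrt ((l:ℝ) - ((a:ℕ):ℝ)) * Real.sqrt ((l:ℝ) - ((a:ℕ):ℝ))) by ring,
            Real.mul_self_sqrt hc, Real.mul_self_sqrt (by linarith)]
        · exact (h2 (hab ▸ h1)).elim
        all_goals simp
      rw [Finset.sum_congr rfl fun x _ => e x, sum_if_eq]
      by_cases ha : (a:ℕ) < l
      · rw [if_pos ha]
        have h2 : (a:ℕ) ≤ l := le_of_lt ha
        push_cast [Nat.cast_sub h2]
        ring
      · rw [if_neg ha]
        have h3 : l - (a:ℕ) = 0 := by omega
        rw [h3]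
        simp
    · rw [if_neg hab]
      have e : ∀ x : Fin l,
          (if (a:ℕ) = (x:ℕ) then ((Real.sqrt (2/((l:ℝ)*((l:ℝ)+1))) * Real.sqrt ((l:ℝ) - ((x:ℕ):ℝ)) : ℝ) : ℂ) else 0) *
          (if (b:ℕ) = (x:ℕ) then ((Real.sqrt (2/((l:ℝ)*((l:ℝ)+1))) * Real.sqrt ((l:ℝ) - ((x:ℕ):ℝ)) : ℝ) : ℂ) else 0) = 0 := by
        intro x
        split_ifs with h1 h2
        · exact (hab (h1.trans h2.symm)).elim
        all_goals simp
      rw [Finset.sum_congr rfl fun x _ => e x, Finset.sum_const_zero]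
      split_ifs <;> ring
  · -- case (0,1)
    by_cases hba : (b:ℕ) = (a:ℕ) + 1
    · have hab : ¬ (a:ℕ) = (b:ℕ) := by omega
      have hal : (a:ℕ) < l := by have := Nat.lt_succ_iff.mp b.isLt; omega
      rw [if_neg hab, if_pos hba]
      have e : ∀ x : Fin l,
          (if (a:ℕ) = (x:ℕ) then ((Real.sqrt (2/((l:ℝ)*((l:ℝ)+1))) * Real.sqrt ((l:ℝ) - ((x:ℕ):ℝ)) : ℝ) : ℂ) else 0) *
          (if (b:ℕ) = (x:ℕ) + 1 then ((Real.sqrt (2/((l:ℝ)*((l:ℝ)+1))) * Real.sqrt (((x:ℕ):ℝ) + 1) : ℝ) : ℂ) else 0) =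
          (if (a:ℕ) = (x:ℕ) then ((2/((l:ℝ)*((l:ℝ)+1)) * Real.sqrt (((l:ℝ) - ((a:ℕ):ℝ)) * (((a:ℕ):ℝ) + 1)) : ℝ) : ℂ) else 0) := by
        intro x
        split_ifs with h1 h2
        · rw [← h1, ← Complex.ofReal_mul]
          congr 1
          have hla : (0:ℝ) ≤ (l:ℝ) - ((a:ℕ):ℝ) := by
            have : ((a:ℕ):ℝ) ≤ (l:ℝ) := by exact_mod_cast le_of_lt hal
            linarith
          rw [show (Real.sqrt (2/((l:ℝ)*((l:ℝ)+1))) * Real.sqrt ((l:ℝ) - ((a:ℕ):ℝ))) *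
              (Real.sqrt (2/((l:ℝ)*((l:ℝ)+1))) * Real.sqrt (((a:ℕ):ℝ) + 1))
              = (Real.sqrt (2/((l:ℝ)*((l:ℝ)+1))) * Real.sqrt (2/((l:ℝ)*((l:ℝ)+1)))) *
                (Real.sqrt ((l:ℝ) - ((a:ℕ):ℝ)) * Real.sqrt (((a:ℕ):ℝ) + 1)) by ring,
            Real.mul_self_sqrt hc, ← Real.sqrt_mul hla]
        · exact (h2 (by omega)).elim
        all_goals simp
      rw [Finset.sum_congr rfl fun x _ => e x, sum_if_eq, if_pos hal]
      push_cast
      ring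
    · have e : ∀ x : Fin l,
          (if (a:ℕ) = (x:ℕ) then ((Real.sqrt (2/((l:ℝ)*((l:ℝ)+1))) * Real.sqrt ((l:ℝ) - ((x:ℕ):ℝ)) : ℝ) : ℂ) else 0) *
          (if (b:ℕ) = (x:ℕ) + 1 then ((Real.sqrt (2/((l:ℝ)*((l:ℝ)+1))) * Real.sqrt (((x:ℕ):ℝ) + 1) : ℝ) : ℂ) else 0) = 0 := by
        intro x
        split_ifs with h1 h2
        · exact absurd (h1 ▸ h2) hba
        all_goals simp
      rw [Finset.sum_congr rfl fun x _ => e x, Finset.sum_const_zero]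
      rw [if_neg hba]
      split_ifs <;> ring
  · -- case (1,0)
    by_cases hab' : (a:ℕ) = (b:ℕ) + 1
    · have hab : ¬ (a:ℕ) = (b:ℕ) := by omega
      have hba : ¬ (b:ℕ) = (a:ℕ) + 1 := by omega
      have hbl : (b:ℕ) < l := by have := Nat.lt_succ_iff.mp a.isLt; omega
      rw [if_neg hab, if_neg hba, if_pos hab']
      have e : ∀ x : Fin l,
          (if (a:ℕ) = (x:ℕ) + 1 then ((Real.sqrt (2/((l:ℝ)*((l:ℝ)+1))) * Real.sqrt (((x:ℕ):ℝ) + 1) : ℝ) : ℂ) else 0) *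
          (if (b:ℕ) = (x:ℕ) then ((Real.sqrt (2/((l:ℝ)*((l:ℝ)+1))) * Real.sqrt ((l:ℝ) - ((x:ℕ):ℝ)) : ℝ) : ℂ) else 0) =
          (if (b:ℕ) = (x:ℕ) then ((2/((l:ℝ)*((l:ℝ)+1)) * Real.sqrt (((l:ℝ) - ((b:ℕ):ℝ)) * (((b:ℕ):ℝ) + 1)) : ℝ) : ℂ) else 0) := by
        intro x
        split_ifs with h1 h2
        · rw [← h2, ← Complex.ofReal_mul]
          congr 1
          have hlb : (0:ℝ) ≤ (l:ℝ) - ((b:ℕ):ℝ) := by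
            have : ((b:ℕ):ℝ) ≤ (l:ℝ) := by exact_mod_cast le_of_lt hbl
            linarith
          rw [show (Real.sqrt (2/((l:ℝ)*((l:ℝ)+1))) * Real.sqrt (((b:ℕ):ℝ) + 1)) *
              (Real.sqrt (2/((l:ℝ)*((l:ℝ)+1))) * Real.sqrt ((l:ℝ) - ((b:ℕ):ℝ)))
              = (Real.sqrt (2/((l:ℝ)*((l:ℝ)+1))) * Real.sqrt (2/((l:ℝ)*((l:ℝ)+1)))) *
                (Real.sqrt ((l:ℝ) - ((b:ℕ):ℝ)) * Real.sqrt (((b:ℕ):ℝ) + 1)) by ring,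
            Real.mul_self_sqrt hc, ← Real.sqrt_mul hlb]
        all_goals first | (exfalso; omega) | simp
      rw [Finset.sum_congr rfl fun x _ => e x, sum_if_eq, if_pos hbl]
      push_cast
      ring
    · have e : ∀ x : Fin l,
          (if (a:ℕ) = (x:ℕ) + 1 then ((Real.sqrt (2/((l:ℝ)*((l:ℝ)+1))) * Real.sqrt (((x:ℕ):ℝ) + 1) : ℝ) : ℂ) else 0) *
          (if (b:ℕ) = (x:ℕ) then ((Real.sqrt (2/((l:ℝ)*((l:ℝ)+1))) * Real.sqrt ((l:ℝ) - ((x:ℕ):ℝ)) : ℝ) : ℂ) else 0) = 0 := by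
        intro x
        split_ifs <;> first | (exfalso; omega) | simp
      rw [Finset.sum_congr rfl fun x _ => e x, Finset.sum_const_zero, if_neg hab']
      split_ifs <;> ring
  · -- case (1,1)
    by_cases hab : (a:ℕ) = (b:ℕ)
    · rw [if_pos hab]
      have e : ∀ x : Fin l,
          (if (a:ℕ) = (x:ℕ) + 1 then ((Real.sqrt (2/((l:ℝ)*((l:ℝ)+1))) * Real.sqrt (((x:ℕ):ℝ) + 1) : ℝ) : ℂ) else 0) *
          (if (b:ℕ) = (x:ℕ) + 1 then ((Real.sqrt (2/((l:ℝ)*((l:ℝ)+1))) * Real.sqrt (((x:ℕ):ℝ) + 1) : ℝ) : ℂ) else 0) =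
          (if (a:ℕ) = (x:ℕ) + 1 then ((2/((l:ℝ)*((l:ℝ)+1)) * ((a:ℕ):ℝ) : ℝ) : ℂ) else 0) := by
        intro x
        split_ifs with h1 h2
        · rw [← Complex.ofReal_mul]
          congr 1
          have hx : (((x:ℕ):ℝ) + 1) = ((a:ℕ):ℝ) := by
            have : (x:ℕ) + 1 = (a:ℕ) := by omega
            exact_mod_cast this
          rw [show (Real.sqrt (2/((l:ℝ)*((l:ℝ)+1))) * Real.sqrt (((x:ℕ):ℝ) + 1)) *
              (Real.sqrt (2/((l:ℝ)*((l:ℝ)+1))) * Real.sqrt (((x:ℕ):ℝ) + 1))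
              = (Real.sqrt (2/((l:ℝ)*((l:ℝ)+1))) * Real.sqrt (2/((l:ℝ)*((l:ℝ)+1)))) *
                (Real.sqrt (((x:ℕ):ℝ) + 1) * Real.sqrt (((x:ℕ):ℝ) + 1)) by ring,
            Real.mul_self_sqrt hc, Real.mul_self_sqrt (by positivity), hx]
        all_goals first | (exfalso; omega) | simp
      rw [Finset.sum_congr rfl fun x _ => e x, sum_if_eq_succ]
      have hal : (a:ℕ) ≤ l := Nat.lt_succ_iff.mp a.isLt
      by_cases ha : 1 ≤ (a:ℕ)
      · rw [if_pos ⟨ha, hal⟩]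
        push_cast
        ring
      · rw [if_neg (by omega)]
        have : (a:ℕ) = 0 := by omega
        rw [this]
        simp
    · rw [if_neg hab]
      have e : ∀ x : Fin l,
          (if (a:ℕ) = (x:ℕ) + 1 then ((Real.sqrt (2/((l:ℝ)*((l:ℝ)+1))) * Real.sqrt (((x:ℕ):ℝ) + 1) : ℝ) : ℂ) else 0) *
          (if (b:ℕ) = (x:ℕ) + 1 then ((Real.sqrt (2/((l:ℝ)*((l:ℝ)+1))) * Real.sqrt (((x:ℕ):ℝ) + 1) : ℝ) : ℂ) else 0) = 0 := by
        intro x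
        split_ifs <;> first | (exfalso; omega) | simp
      rw [Finset.sum_congr rfl fun x _ => e x, Finset.sum_const_zero]
      split_ifs <;> ring


def Bp (l : ℕ) : Matrix (Fin l) (Fin 2 × Fin (l+1)) ℂ :=
  fun u x =>
    if x.1 = 0 ∧ (x.2 : ℕ) = (u : ℕ) + 1 then
      ((Real.sqrt (2 / ((l:ℝ)*((l:ℝ)+1))) * Real.sqrt (((u:ℕ):ℝ) + 1) : ℝ) : ℂ)
    else if x.1 = 1 ∧ (x.2 : ℕ) = (u : ℕ) then
      -((Real.sqrt (2 / ((l:ℝ)*((l:ℝ)+1))) * Real.sqrt ((l:ℝ) - ((u:ℕ):ℝ)) : ℝ) : ℂ)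
    else 0

lemma choiPT_eq (l : ℕ) (hl : 1 ≤ l) :
    choiPT (PhiFam l (((l:ℝ)+2)/((l:ℝ)+1))) = (Bp l)ᴴ * Bp l := by
  have hc : (0:ℝ) ≤ 2 / ((l:ℝ)*((l:ℝ)+1)) := by positivity
  have hl0 : (l:ℂ) ≠ 0 := Nat.cast_ne_zero.mpr (by omega)
  have hl1 : ((l:ℂ)+1) ≠ 0 := by
    have : ((l+1:ℕ):ℂ) ≠ 0 := Nat.cast_ne_zero.mpr l.succ_ne_zero
    push_cast at this; exact this
  have hl2 : ((l:ℂ)+2) ≠ 0 := by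
    have : ((l+2:ℕ):ℂ) ≠ 0 := Nat.cast_ne_zero.mpr (by omega)
    push_cast at this; exact this
  ext ⟨s, a⟩ ⟨t, b⟩
  rw [Matrix.mul_apply]
  simp only [conjTranspose_apply]
  fin_cases s <;> fin_cases t <;>
    simp only [choiPT, PhiFam, PhiM, PhiP, Bp, Matrix.single, Matrix.of_apply,
      Matrix.add_apply, Matrix.smul_apply, smul_eq_mul] <;>
    simp only [show ((⟨0, by omega⟩ : Fin 2) = 0) = True by simp, show ((⟨0, by omega⟩ : Fin 2) = 1) = False by simp,
      show ((⟨1, by omega⟩ : Fin 2) = 0) = False by simp, show ((⟨1, by omega⟩ : Fin 2) = 1) = True by simp,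
      and_true, and_false, true_and, false_and, if_true, if_false, ite_true, ite_false,
      mul_one, mul_zero, add_zero, zero_add] <;>
    simp only [apply_ite (star : ℂ → ℂ), star_zero, star_neg, Complex.star_def,
      Complex.conj_ofReal] <;>
    [skip; skip; skip; skip]
  · -- case (0,0)
    by_cases hba : (b:ℕ) = (a:ℕ)
    · rw [if_pos hba, if_pos hba]
      have hal : (a:ℕ) ≤ l := Nat.lt_succ_iff.mp a.isLt
      have hbl : (b:ℕ) ≤ l := Nat.lt_succ_iff.mp b.isLt
      have e : ∀ x : Fin l,
          (if (a:ℕ) = (x:ℕ) + 1 then ((Real.sqrt (2/((l:ℝ)*((l:ℝ)+1))) * Real.sqrt (((x:ℕ):ℝ) + 1) : ℝ) : ℂ) else 0) *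
          (if (b:ℕ) = (x:ℕ) + 1 then ((Real.sqrt (2/((l:ℝ)*((l:ℝ)+1))) * Real.sqrt (((x:ℕ):ℝ) + 1) : ℝ) : ℂ) else 0) =
          (if (a:ℕ) = (x:ℕ) + 1 then ((2/((l:ℝ)*((l:ℝ)+1)) * ((a:ℕ):ℝ) : ℝ) : ℂ) else 0) := by
        intro x
        split_ifs with h1 h2
        · rw [← Complex.ofReal_mul]
          congr 1
          have hx : (((x:ℕ):ℝ) + 1) = ((a:ℕ):ℝ) := by
            have : (x:ℕ) + 1 = (a:ℕ) := by omega
            exact_mod_cast this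
          rw [show (Real.sqrt (2/((l:ℝ)*((l:ℝ)+1))) * Real.sqrt (((x:ℕ):ℝ) + 1)) *
              (Real.sqrt (2/((l:ℝ)*((l:ℝ)+1))) * Real.sqrt (((x:ℕ):ℝ) + 1))
              = (Real.sqrt (2/((l:ℝ)*((l:ℝ)+1))) * Real.sqrt (2/((l:ℝ)*((l:ℝ)+1)))) *
                (Real.sqrt (((x:ℕ):ℝ) + 1) * Real.sqrt (((x:ℕ):ℝ) + 1)) by ring,
            Real.mul_self_sqrt hc, Real.mul_self_sqrt (by positivity), hx]
        all_goals first | (exfalso; omega) | simp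
      rw [Finset.sum_congr rfl fun x _ => e x, sum_if_eq_succ]
      have hba' : ((b:ℕ):ℂ) = ((a:ℕ):ℂ) := by exact_mod_cast hba
      by_cases ha1 : 1 ≤ (a:ℕ)
      · rw [if_pos (show 1 ≤ (a:ℕ) ∧ (a:ℕ) ≤ l from ⟨ha1, hal⟩), Nat.cast_sub hbl, hba']
        push_cast
        field_simp
        ring
      · rw [if_neg (show ¬(1 ≤ (a:ℕ) ∧ (a:ℕ) ≤ l) from by omega), show l - (b:ℕ) = l from by omega,
          show ((b:ℕ):ℂ) = 0 from by exact_mod_cast (by omega : (b:ℕ) = 0)]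
        push_cast
        field_simp
        ring
    · rw [if_neg hba, if_neg hba]
      have e : ∀ x : Fin l,
          (if (a:ℕ) = (x:ℕ) + 1 then ((Real.sqrt (2/((l:ℝ)*((l:ℝ)+1))) * Real.sqrt (((x:ℕ):ℝ) + 1) : ℝ) : ℂ) else 0) *
          (if (b:ℕ) = (x:ℕ) + 1 then ((Real.sqrt (2/((l:ℝ)*((l:ℝ)+1))) * Real.sqrt (((x:ℕ):ℝ) + 1) : ℝ) : ℂ) else 0) = 0 := by
        intro x
        split_ifs <;> first | (exfalso; omega) | simp
      rw [Finset.sum_congr rfl fun x _ => e x, Finset.sum_const_zero]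
      split_ifs <;> ring
  · -- case (0,1)
    by_cases hab1 : (a:ℕ) = (b:ℕ) + 1
    · have hba : ¬ (b:ℕ) = (a:ℕ) := by omega
      have hbl : (b:ℕ) < l := by have := Nat.lt_succ_iff.mp a.isLt; omega
      have hblR : (0:ℝ) ≤ (l:ℝ) - ((b:ℕ):ℝ) := by
        have : ((b:ℕ):ℝ) ≤ (l:ℝ) := by exact_mod_cast le_of_lt hbl
        linarith
      rw [if_neg hba, if_pos hab1, if_neg hba, if_pos hab1]
      have e : ∀ x : Fin l,
          (if (a:ℕ) = (x:ℕ) + 1 then ((Real.sqrt (2/((l:ℝ)*((l:ℝ)+1))) * Real.sqrt (((x:ℕ):ℝ) + 1) : ℝ) : ℂ) else 0) *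
          (if (b:ℕ) = (x:ℕ) then -((Real.sqrt (2/((l:ℝ)*((l:ℝ)+1))) * Real.sqrt ((l:ℝ) - ((x:ℕ):ℝ)) : ℝ) : ℂ) else 0) =
          (if (b:ℕ) = (x:ℕ) then -((2/((l:ℝ)*((l:ℝ)+1)) * Real.sqrt (((l:ℝ) - ((b:ℕ):ℝ)) * (((b:ℕ):ℝ) + 1)) : ℝ) : ℂ) else 0) := by
        intro x
        split_ifs with h1 h2
        · rw [← h2, mul_neg, ← Complex.ofReal_mul]
          congr 2
          have hx : (((b:ℕ):ℝ) + 1) = (((b:ℕ):ℝ) + 1) := rfl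
          rw [show (Real.sqrt (2/((l:ℝ)*((l:ℝ)+1))) * Real.sqrt (((b:ℕ):ℝ) + 1)) *
              (Real.sqrt (2/((l:ℝ)*((l:ℝ)+1))) * Real.sqrt ((l:ℝ) - ((b:ℕ):ℝ)))
              = (Real.sqrt (2/((l:ℝ)*((l:ℝ)+1))) * Real.sqrt (2/((l:ℝ)*((l:ℝ)+1)))) *
                (Real.sqrt ((l:ℝ) - ((b:ℕ):ℝ)) * Real.sqrt (((b:ℕ):ℝ) + 1)) by ring,
            Real.mul_self_sqrt hc, ← Real.sqrt_mul hblR]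
        all_goals first | (exfalso; omega) | simp
      rw [Finset.sum_congr rfl fun x _ => e x, sum_if_eq, if_pos hbl]
      push_cast
      field_simp
      ring
    · have e : ∀ x : Fin l,
          (if (a:ℕ) = (x:ℕ) + 1 then ((Real.sqrt (2/((l:ℝ)*((l:ℝ)+1))) * Real.sqrt (((x:ℕ):ℝ) + 1) : ℝ) : ℂ) else 0) *
          (if (b:ℕ) = (x:ℕ) then -((Real.sqrt (2/((l:ℝ)*((l:ℝ)+1))) * Real.sqrt ((l:ℝ) - ((x:ℕ):ℝ)) : ℝ) : ℂ) else 0) = 0 := by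
        intro x
        split_ifs <;> first | (exfalso; omega) | simp
      rw [Finset.sum_congr rfl fun x _ => e x, Finset.sum_const_zero]
      split_ifs <;> ring
  · -- case (1,0)
    by_cases hba1 : (b:ℕ) = (a:ℕ) + 1
    · have hba : ¬ (b:ℕ) = (a:ℕ) := by omega
      have hab1 : ¬ (a:ℕ) = (b:ℕ) + 1 := by omega
      have hal : (a:ℕ) < l := by have := Nat.lt_succ_iff.mp b.isLt; omega
      have halR : (0:ℝ) ≤ (l:ℝ) - ((a:ℕ):ℝ) := by
        have : ((a:ℕ):ℝ) ≤ (l:ℝ) := by exact_mod_cast le_of_lt hal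
        linarith
      rw [if_neg hba, if_neg hab1, if_pos hba1, if_neg hba, if_neg hab1, if_pos hba1]
      have e : ∀ x : Fin l,
          (if (a:ℕ) = (x:ℕ) then -((Real.sqrt (2/((l:ℝ)*((l:ℝ)+1))) * Real.sqrt ((l:ℝ) - ((x:ℕ):ℝ)) : ℝ) : ℂ) else 0) *
          (if (b:ℕ) = (x:ℕ) + 1 then ((Real.sqrt (2/((l:ℝ)*((l:ℝ)+1))) * Real.sqrt (((x:ℕ):ℝ) + 1) : ℝ) : ℂ) else 0) =
          (if (a:ℕ) = (x:ℕ) then -((2/((l:ℝ)*((l:ℝ)+1)) * Real.sqrt (((l:ℝ) - ((a:ℕ):ℝ)) * (((a:ℕ):ℝ) + 1)) : ℝ) : ℂ) else 0) := by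
        intro x
        split_ifs with h1 h2
        · rw [← h1, neg_mul, ← Complex.ofReal_mul]
          congr 2
          rw [show (Real.sqrt (2/((l:ℝ)*((l:ℝ)+1))) * Real.sqrt ((l:ℝ) - ((a:ℕ):ℝ))) *
              (Real.sqrt (2/((l:ℝ)*((l:ℝ)+1))) * Real.sqrt (((a:ℕ):ℝ) + 1))
              = (Real.sqrt (2/((l:ℝ)*((l:ℝ)+1))) * Real.sqrt (2/((l:ℝ)*((l:ℝ)+1)))) *
                (Real.sqrt ((l:ℝ) - ((a:ℕ):ℝ)) * Real.sqrt (((a:ℕ):ℝ) + 1)) by ring,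
            Real.mul_self_sqrt hc, ← Real.sqrt_mul halR]
        all_goals first | (exfalso; omega) | simp
      rw [Finset.sum_congr rfl fun x _ => e x, sum_if_eq, if_pos hal]
      push_cast
      field_simp
      ring
    · have e : ∀ x : Fin l,
          (if (a:ℕ) = (x:ℕ) then -((Real.sqrt (2/((l:ℝ)*((l:ℝ)+1))) * Real.sqrt ((l:ℝ) - ((x:ℕ):ℝ)) : ℝ) : ℂ) else 0) *
          (if (b:ℕ) = (x:ℕ) + 1 then ((Real.sqrt (2/((l:ℝ)*((l:ℝ)+1))) * Real.sqrt (((x:ℕ):ℝ) + 1) : ℝ) : ℂ) else 0) = 0 := by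
        intro x
        split_ifs <;> first | (exfalso; omega) | simp
      rw [Finset.sum_congr rfl fun x _ => e x, Finset.sum_const_zero]
      split_ifs <;> ring
  · -- case (1,1)
    by_cases hba : (b:ℕ) = (a:ℕ)
    · rw [if_pos hba, if_pos hba]
      have hal : (a:ℕ) ≤ l := Nat.lt_succ_iff.mp a.isLt
      have hbl : (b:ℕ) ≤ l := Nat.lt_succ_iff.mp b.isLt
      have e : ∀ x : Fin l,
          (if (a:ℕ) = (x:ℕ) then -((Real.sqrt (2/((l:ℝ)*((l:ℝ)+1))) * Real.sqrt ((l:ℝ) - ((x:ℕ):ℝ)) : ℝ) : ℂ) else 0) *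
          (if (b:ℕ) = (x:ℕ) then -((Real.sqrt (2/((l:ℝ)*((l:ℝ)+1))) * Real.sqrt ((l:ℝ) - ((x:ℕ):ℝ)) : ℝ) : ℂ) else 0) =
          (if (a:ℕ) = (x:ℕ) then ((2/((l:ℝ)*((l:ℝ)+1)) * ((l:ℝ) - ((a:ℕ):ℝ)) : ℝ) : ℂ) else 0) := by
        intro x
        split_ifs with h1 h2
        · rw [← h1, neg_mul_neg, ← Complex.ofReal_mul]
          congr 1
          have halR : (0:ℝ) ≤ (l:ℝ) - ((a:ℕ):ℝ) := by
            have : ((a:ℕ):ℝ) ≤ (l:ℝ) := by exact_mod_cast hal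
            linarith
          rw [show (Real.sqrt (2/((l:ℝ)*((l:ℝ)+1))) * Real.sqrt ((l:ℝ) - ((a:ℕ):ℝ))) *
              (Real.sqrt (2/((l:ℝ)*((l:ℝ)+1))) * Real.sqrt ((l:ℝ) - ((a:ℕ):ℝ)))
              = (Real.sqrt (2/((l:ℝ)*((l:ℝ)+1))) * Real.sqrt (2/((l:ℝ)*((l:ℝ)+1)))) *
                (Real.sqrt ((l:ℝ) - ((a:ℕ):ℝ)) * Real.sqrt ((l:ℝ) - ((a:ℕ):ℝ))) by ring,
            Real.mul_self_sqrt hc, Real.mul_self_sqrt halR]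
        all_goals first | (exfalso; omega) | simp
      rw [Finset.sum_congr rfl fun x _ => e x, sum_if_eq]
      have hba' : ((b:ℕ):ℂ) = ((a:ℕ):ℂ) := by exact_mod_cast hba
      by_cases ha1 : (a:ℕ) < l
      · rw [if_pos ha1, Nat.cast_sub hbl, hba']
        push_cast
        field_simp
        ring
      · rw [if_neg ha1, show l - (b:ℕ) = 0 from by omega,
          show ((b:ℕ):ℂ) = (l:ℂ) from by exact_mod_cast (by omega : (b:ℕ) = l)]
        push_cast
        field_simp
        ring
    · rw [if_neg hba, if_neg hba]
      have e : ∀ x : Fin l,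
          (if (a:ℕ) = (x:ℕ) then -((Real.sqrt (2/((l:ℝ)*((l:ℝ)+1))) * Real.sqrt ((l:ℝ) - ((x:ℕ):ℝ)) : ℝ) : ℂ) else 0) *
          (if (b:ℕ) = (x:ℕ) then -((Real.sqrt (2/((l:ℝ)*((l:ℝ)+1))) * Real.sqrt ((l:ℝ) - ((x:ℕ):ℝ)) : ℝ) : ℂ) else 0) = 0 := by
        intro x
        split_ifs <;> first | (exfalso; omega) | simp
      rw [Finset.sum_congr rfl fun x _ => e x, Finset.sum_const_zero]
      split_ifs <;> ring


end ChoiComputations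

section Witnesses


lemma lower_bound {l : ℕ} (hl : 1 ≤ l) {p : ℝ} (h : IsPosMap (PhiFam l p)) : 0 ≤ p := by
  have hE : (Matrix.single (1 : Fin 2) 1 (1:ℂ)).PosSemidef := by
    rw [posSemidef_iff_dotProduct_mulVec]
    constructor
    · ext i j
      fin_cases i <;> fin_cases j <;>
        simp [Matrix.conjTranspose_apply, Matrix.single]
    · intro x
      have hv : (Matrix.single (1 : Fin 2) 1 (1:ℂ)) *ᵥ x
          = fun i => if i = 1 then x 1 else 0 := by
        funext i
        fin_cases i <;>
          simp [Matrix.mulVec, dotProduct, Fin.sum_univ_two, Matrix.single]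
      rw [hv]
      have : (star x) ⬝ᵥ (fun i => if i = 1 then x 1 else 0) = star (x 1) * (x 1) := by
        simp [dotProduct, Fin.sum_univ_two]
      rw [this]
      exact star_mul_self_nonneg _
  have hM := (h _ hE).dotProduct_mulVec_nonneg (Pi.single 0 1)
  have hval : (star ((Pi.single (0 : Fin (l+1)) (1:ℂ)) : Fin (l+1) → ℂ)) ⬝ᵥ
      ((PhiFam l p (Matrix.single (1 : Fin 2) 1 (1:ℂ))) *ᵥ Pi.single 0 1)
      = ((p * (2 / (((l:ℝ)+1)*((l:ℝ)+2))) * ((l:ℝ)+1) : ℝ) : ℂ) := by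
    rw [dotProduct]
    have hsingle : ∀ i : Fin (l+1), (star ((Pi.single (0 : Fin (l+1)) (1:ℂ)) : Fin (l+1) → ℂ)) i
        = if (0:Fin (l+1)) = i then 1 else 0 := by
      intro i
      by_cases hi : (0 : Fin (l+1)) = i
      · subst hi; simp
      · rw [if_neg hi, Pi.star_apply, Pi.single_eq_of_ne (Ne.symm hi)]
        simp
    rw [Finset.sum_congr rfl fun i _ => by rw [hsingle i]]
    simp only [ite_mul, one_mul, zero_mul]
    rw [Finset.sum_ite_eq (Finset.univ : Finset (Fin (l+1))) (0 : Fin (l+1))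
      (fun i => (PhiFam l p (Matrix.single (1 : Fin 2) 1 (1:ℂ)) *ᵥ Pi.single 0 1) i),
      if_pos (Finset.mem_univ _)]
    rw [Matrix.mulVec_single]
    simp only [Pi.smul_apply, Matrix.col_apply, MulOpposite.op_one, one_smul]
    simp only [PhiFam, PhiM, PhiP, Matrix.add_apply, Matrix.smul_apply, smul_eq_mul]
    norm_num [Matrix.single]
    push_cast
    ring
  rw [hval] at hM
  have hr := Complex.zero_le_real.mp hM
  have hk : (0:ℝ) < (2 / (((l:ℝ)+1)*((l:ℝ)+2))) * ((l:ℝ)+1) := by positivity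
  nlinarith [hr, hk]

lemma nat_sum_lemma {l : ℕ} (hl : 1 ≤ l) :
    ∑ x ∈ Finset.range l, (l - x) * l.choose x = l * 2^(l-1) := by
  have step : ∀ x ∈ Finset.range l, (l - x) * l.choose x = l * (l-1).choose x := by
    intro x _
    calc (l - x) * l.choose x = l.choose x * (l - x) := mul_comm _ _
      _ = l.choose (x+1) * (x+1) := (Nat.choose_succ_right_eq l x).symm
      _ = (l-1+1).choose (x+1) * (x+1) := by rw [show l-1+1 = l by omega]
      _ = (l-1).succ * (l-1).choose x := (Nat.add_one_mul_choose_eq (l-1) x).symm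
      _ = l * (l-1).choose x := by rw [show (l-1).succ = l by omega]
  rw [Finset.sum_congr rfl step, ← Finset.mul_sum]
  congr 1
  rw [show l = (l-1)+1 by omega] ; exact Nat.sum_range_choose (l-1)

set_option maxHeartbeats 1600000 in
lemma upper_bound {l : ℕ} (hl : 1 ≤ l) {p : ℝ} (h : IsPosMap (PhiFam l p)) :
    p ≤ ((l:ℝ)+2)/((l:ℝ)+1) := by
  have hl1R : (0:ℝ) < (l:ℝ)+1 := by positivity
  have hl2R : (0:ℝ) < (l:ℝ)+2 := by positivity
  have hlR : (0:ℝ) < (l:ℝ) := by exact_mod_cast Nat.pos_of_ne_zero (by omega)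
  set D : ℝ := (1-p)*(2/((l:ℝ)*((l:ℝ)+1)))*(l:ℝ) + p*(2/(((l:ℝ)+1)*((l:ℝ)+2)))*((l:ℝ)+2) with hD
  set q : ℝ := (1-p)*(2/((l:ℝ)*((l:ℝ)+1))) - p*(2/(((l:ℝ)+1)*((l:ℝ)+2))) with hq
  set w : Fin (l+1) → ℂ := fun a => ((Real.sqrt (l.choose (a:ℕ)) : ℝ) : ℂ) with hw
  have hOnes : (Matrix.of (fun _ _ : Fin 2 => (1:ℂ))).PosSemidef := by
    rw [posSemidef_iff_dotProduct_mulVec]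
    constructor
    · ext i j
      simp [Matrix.conjTranspose_apply]
    · intro x
      have hv : (Matrix.of (fun _ _ : Fin 2 => (1:ℂ))) *ᵥ x = fun _ => x 0 + x 1 := by
        funext i
        simp [Matrix.mulVec, dotProduct, Fin.sum_univ_two]
      rw [hv]
      have : (star x) ⬝ᵥ (fun _ : Fin 2 => x 0 + x 1) = star (x 0 + x 1) * (x 0 + x 1) := by
        simp [dotProduct, Fin.sum_univ_two, star_add]
        ring
      rw [this]
      exact star_mul_self_nonneg _
  have hM := (h _ hOnes).dotProduct_mulVec_nonneg w
  set M : Matrix (Fin (l+1)) (Fin (l+1)) ℂ := PhiFam l p (Matrix.of (fun _ _ : Fin 2 => (1:ℂ))) with hMdef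
  -- pointwise expansion
  have e : ∀ a b : Fin (l+1), star (w a) * (M a b * w b) =
      (if (a:ℕ) = (b:ℕ) then ((D * (l.choose (a:ℕ)) : ℝ):ℂ) else 0)
    + (if (b:ℕ) = (a:ℕ)+1 then ((q * ((l:ℝ) - ((a:ℕ):ℝ)) * (l.choose (a:ℕ)) : ℝ):ℂ) else 0)
    + (if (a:ℕ) = (b:ℕ)+1 then ((q * ((l:ℝ) - ((b:ℕ):ℝ)) * (l.choose (b:ℕ)) : ℝ):ℂ) else 0) := by
    intro a b
    have hal : (a:ℕ) ≤ l := Nat.lt_succ_iff.mp a.isLt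
    have hbl : (b:ℕ) ≤ l := Nat.lt_succ_iff.mp b.isLt
    simp only [hMdef, hw, PhiFam, PhiM, PhiP, Matrix.add_apply, Matrix.smul_apply, smul_eq_mul,
      Matrix.of_apply, mul_one, Complex.star_def, Complex.conj_ofReal]
    split_ifs with h1 h2 h3
    · exfalso; omega
    · exfalso; omega
    · exfalso; omega
    · -- diagonal
      rw [show (b:ℕ) = (a:ℕ) from by omega, Nat.cast_sub hal]
      have hCC : ((Real.sqrt (l.choose (a:ℕ)) : ℝ):ℂ) * ((Real.sqrt (l.choose (a:ℕ)) : ℝ):ℂ)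
          = ((l.choose (a:ℕ) : ℕ):ℂ) := by
        rw [← Complex.ofReal_mul, Real.mul_self_sqrt (Nat.cast_nonneg _)]
        norm_cast
      push_cast [hD]
      linear_combination (((1:ℂ)-(p:ℂ))*(2/((l:ℂ)*((l:ℂ)+1)))*(l:ℂ)
        + (p:ℂ)*(2/(((l:ℂ)+1)*((l:ℂ)+2)))*((l:ℂ)+2)) * hCC
    · exfalso; omega
    · -- superdiagonal b = a+1
      have hal' : (a:ℕ) < l := by omega
      have halR : ((a:ℕ):ℝ) ≤ (l:ℝ) := by exact_mod_cast hal
      have hR : Real.sqrt (l.choose (a:ℕ)) * Real.sqrt (((l:ℝ) - ((a:ℕ):ℝ)) * (((a:ℕ):ℝ)+1))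
          * Real.sqrt (l.choose ((a:ℕ)+1))
          = ((l:ℝ) - ((a:ℕ):ℝ)) * (l.choose (a:ℕ)) := by
        have hnat := Nat.choose_succ_right_eq l (a:ℕ)
        have hcast : ((l - (a:ℕ) : ℕ) : ℝ) = (l:ℝ) - ((a:ℕ):ℝ) := by
          rw [Nat.cast_sub hal]
        have hkey : ((l.choose (a:ℕ) : ℝ)) * ((((l:ℝ) - ((a:ℕ):ℝ))*(((a:ℕ):ℝ)+1)))
            * (l.choose ((a:ℕ)+1)) = (((l:ℝ) - ((a:ℕ):ℝ)) * (l.choose (a:ℕ)))^2 := by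
          have hnatR : ((l.choose ((a:ℕ)+1) : ℕ) : ℝ) * (((a:ℕ):ℝ)+1)
              = ((l.choose (a:ℕ) : ℕ) : ℝ) * ((l:ℝ) - ((a:ℕ):ℝ)) := by
            rw [← hcast]
            exact_mod_cast congrArg (Nat.cast (R := ℝ)) hnat
          linear_combination (((l:ℝ) - ((a:ℕ):ℝ)) * ((l.choose (a:ℕ) : ℕ) : ℝ)) * hnatR
        rw [← Real.sqrt_mul (Nat.cast_nonneg _),
          ← Real.sqrt_mul (mul_nonneg (Nat.cast_nonneg _)
            (mul_nonneg (by linarith) (by positivity))), hkey,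
          Real.sqrt_sq (mul_nonneg (by linarith) (Nat.cast_nonneg _))]
      have hSC : ((Real.sqrt (l.choose (a:ℕ)) : ℝ):ℂ)
          * ((Real.sqrt (((l:ℝ) - ((a:ℕ):ℝ)) * (((a:ℕ):ℝ)+1)) : ℝ):ℂ)
          * ((Real.sqrt (l.choose ((a:ℕ)+1)) : ℝ):ℂ)
          = (((((l:ℝ) - ((a:ℕ):ℝ)) * (l.choose (a:ℕ)) : ℝ)):ℂ) := by
        exact_mod_cast congrArg (Complex.ofReal) hR
      rw [show (b:ℕ) = (a:ℕ)+1 from by omega]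
      push_cast [hq]
      push_cast at hSC
      linear_combination (((1:ℂ)-(p:ℂ))*(2/((l:ℂ)*((l:ℂ)+1)))
        - (p:ℂ)*(2/(((l:ℂ)+1)*((l:ℂ)+2)))) * hSC
    · -- subdiagonal a = b+1
      have hbl' : (b:ℕ) < l := by omega
      have hblR : ((b:ℕ):ℝ) ≤ (l:ℝ) := by exact_mod_cast hbl
      have hR : Real.sqrt (l.choose (b:ℕ)) * Real.sqrt (((l:ℝ) - ((b:ℕ):ℝ)) * (((b:ℕ):ℝ)+1))
          * Real.sqrt (l.choose ((b:ℕ)+1))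
          = ((l:ℝ) - ((b:ℕ):ℝ)) * (l.choose (b:ℕ)) := by
        have hnat := Nat.choose_succ_right_eq l (b:ℕ)
        have hcast : ((l - (b:ℕ) : ℕ) : ℝ) = (l:ℝ) - ((b:ℕ):ℝ) := by
          rw [Nat.cast_sub hbl]
        have hkey : ((l.choose (b:ℕ) : ℝ)) * ((((l:ℝ) - ((b:ℕ):ℝ))*(((b:ℕ):ℝ)+1)))
            * (l.choose ((b:ℕ)+1)) = (((l:ℝ) - ((b:ℕ):ℝ)) * (l.choose (b:ℕ)))^2 := by
          have hnatR : ((l.choose ((b:ℕ)+1) : ℕ) : ℝ) * (((b:ℕ):ℝ)+1)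
              = ((l.choose (b:ℕ) : ℕ) : ℝ) * ((l:ℝ) - ((b:ℕ):ℝ)) := by
            rw [← hcast]
            exact_mod_cast congrArg (Nat.cast (R := ℝ)) hnat
          linear_combination (((l:ℝ) - ((b:ℕ):ℝ)) * ((l.choose (b:ℕ) : ℕ) : ℝ)) * hnatR
        rw [← Real.sqrt_mul (Nat.cast_nonneg _),
          ← Real.sqrt_mul (mul_nonneg (Nat.cast_nonneg _)
            (mul_nonneg (by linarith) (by positivity))), hkey,
          Real.sqrt_sq (mul_nonneg (by linarith) (Nat.cast_nonneg _))]
      have hSC : ((Real.sqrt (l.choose (b:ℕ)) : ℝ):ℂ)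
          * ((Real.sqrt (((l:ℝ) - ((b:ℕ):ℝ)) * (((b:ℕ):ℝ)+1)) : ℝ):ℂ)
          * ((Real.sqrt (l.choose ((b:ℕ)+1)) : ℝ):ℂ)
          = (((((l:ℝ) - ((b:ℕ):ℝ)) * (l.choose (b:ℕ)) : ℝ)):ℂ) := by
        exact_mod_cast congrArg (Complex.ofReal) hR
      rw [show (a:ℕ) = (b:ℕ)+1 from by omega]
      push_cast [hq]
      push_cast at hSC
      linear_combination (((1:ℂ)-(p:ℂ))*(2/((l:ℂ)*((l:ℂ)+1)))
        - (p:ℂ)*(2/(((l:ℂ)+1)*((l:ℂ)+2)))) * hSC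
    · -- all zero
      simp
  -- sum it up
  have hQ : (star w) ⬝ᵥ (M *ᵥ w) = ∑ a : Fin (l+1), ∑ b : Fin (l+1),
      star (w a) * (M a b * w b) := by
    simp [dotProduct, Matrix.mulVec, Finset.mul_sum]
  rw [hQ, Finset.sum_congr rfl fun a _ => Finset.sum_congr rfl fun b _ => e a b] at hM
  simp only [Finset.sum_add_distrib] at hM
  -- first sum
  have hS1 : ∑ a : Fin (l+1), ∑ b : Fin (l+1),
      (if (a:ℕ) = (b:ℕ) then ((D * (l.choose (a:ℕ)) : ℝ):ℂ) else 0)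
      = ((D * 2^l : ℝ) : ℂ) := by
    have inner : ∀ a : Fin (l+1), ∑ b : Fin (l+1),
        (if (a:ℕ) = (b:ℕ) then ((D * (l.choose (a:ℕ)) : ℝ):ℂ) else 0)
        = ((D * (l.choose (a:ℕ)) : ℝ):ℂ) := by
      intro a
      rw [sum_if_eq, if_pos a.isLt]
    rw [Finset.sum_congr rfl fun a _ => inner a,
      Fin.sum_univ_eq_sum_range (fun a => ((D * (l.choose a) : ℝ):ℂ)) (l+1)]
    have hch : ∑ a ∈ Finset.range (l+1), ((l.choose a : ℕ):ℂ) = ((2^l : ℕ) : ℂ) := by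
      rw [← Nat.cast_sum]
      exact_mod_cast congrArg (Nat.cast (R := ℂ)) (Nat.sum_range_choose l)
    push_cast
    rw [← Finset.mul_sum]
    push_cast at hch
    rw [hch]
  -- second and third sums
  have hS23 : ∀ (f : ℕ → ℂ), ∑ a : Fin (l+1), (if (a:ℕ)+1 < l+1 then f (a:ℕ) else 0)
      = ∑ x ∈ Finset.range l, f x := by
    intro f
    rw [Fin.sum_univ_eq_sum_range (fun a => if a+1 < l+1 then f a else 0) (l+1),
      Finset.sum_range_succ, if_neg (by omega), add_zero]
    refine Finset.sum_congr rfl fun x hx => ?_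
    rw [if_pos (by simpa [Nat.lt_succ_iff] using Finset.mem_range.mp hx)]
  have hSval : ∑ x ∈ Finset.range l, ((q * ((l:ℝ) - (x:ℝ)) * (l.choose x) : ℝ):ℂ)
      = ((q * ((l:ℕ) * 2^(l-1) : ℕ) : ℝ) : ℂ) := by
    have step : ∀ x ∈ Finset.range l, ((q * ((l:ℝ) - (x:ℝ)) * (l.choose x) : ℝ):ℂ)
        = ((q:ℝ):ℂ) * (((l - x) * l.choose x : ℕ) : ℂ) := by
      intro x hx
      have hxl : x ≤ l := le_of_lt (Finset.mem_range.mp hx)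
      push_cast [Nat.cast_sub hxl]
      ring
    rw [Finset.sum_congr rfl step, ← Finset.mul_sum, ← Nat.cast_sum _ (fun x => (l - x) * l.choose x),
      nat_sum_lemma hl]
    push_cast
    ring
  have hS2 : ∑ a : Fin (l+1), ∑ b : Fin (l+1),
      (if (b:ℕ) = (a:ℕ)+1 then ((q * ((l:ℝ) - ((a:ℕ):ℝ)) * (l.choose (a:ℕ)) : ℝ):ℂ) else 0)
      = ((q * ((l:ℕ) * 2^(l-1) : ℕ) : ℝ) : ℂ) := by
    have inner : ∀ a : Fin (l+1), ∑ b : Fin (l+1),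
        (if (b:ℕ) = (a:ℕ)+1 then ((q * ((l:ℝ) - ((a:ℕ):ℝ)) * (l.choose (a:ℕ)) : ℝ):ℂ) else 0)
        = if (a:ℕ)+1 < l+1 then ((q * ((l:ℝ) - ((a:ℕ):ℝ)) * (l.choose (a:ℕ)) : ℝ):ℂ) else 0 :=
      fun a => sum_if_eq' _
    rw [Finset.sum_congr rfl fun a _ => inner a,
      hS23 (fun x => ((q * ((l:ℝ) - (x:ℝ)) * (l.choose x) : ℝ):ℂ)), hSval]
  have hS3 : ∑ a : Fin (l+1), ∑ b : Fin (l+1),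
      (if (a:ℕ) = (b:ℕ)+1 then ((q * ((l:ℝ) - ((b:ℕ):ℝ)) * (l.choose (b:ℕ)) : ℝ):ℂ) else 0)
      = ((q * ((l:ℕ) * 2^(l-1) : ℕ) : ℝ) : ℂ) := by
    rw [Finset.sum_comm]
    have inner : ∀ b : Fin (l+1), ∑ a : Fin (l+1),
        (if (a:ℕ) = (b:ℕ)+1 then ((q * ((l:ℝ) - ((b:ℕ):ℝ)) * (l.choose (b:ℕ)) : ℝ):ℂ) else 0)
        = if (b:ℕ)+1 < l+1 then ((q * ((l:ℝ) - ((b:ℕ):ℝ)) * (l.choose (b:ℕ)) : ℝ):ℂ) else 0 :=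
      fun b => sum_if_eq' _
    rw [Finset.sum_congr rfl fun b _ => inner b,
      hS23 (fun x => ((q * ((l:ℝ) - (x:ℝ)) * (l.choose x) : ℝ):ℂ)), hSval]
  rw [hS1, hS2, hS3] at hM
  have hM' : (0:ℂ) ≤ (((D * 2^l + 2*(q * ((l:ℕ) * 2^(l-1) : ℕ))) : ℝ) : ℂ) := by
    convert hM using 1
    push_cast
    ring
  have hr := Complex.zero_le_real.mp hM'
  -- final algebra
  have h2l : (2:ℝ)^l = 2*(2:ℝ)^(l-1) := by
    rw [← pow_succ']
    congr 1
    omega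
  have hcast : (((l:ℕ) * 2^(l-1) : ℕ) : ℝ) = (l:ℝ) * (2:ℝ)^(l-1) := by push_cast; ring
  rw [hcast] at hr
  have hsum : D * 2^l + 2*(q * ((l:ℝ) * (2:ℝ)^(l-1)))
      = (2:ℝ)^(l-1) * ((8*((l:ℝ)+2) - 8*p*((l:ℝ)+1)) / (((l:ℝ)+1)*((l:ℝ)+2))) := by
    rw [hD, hq, h2l]
    field_simp
    ring
  rw [hsum] at hr
  have hpow : (0:ℝ) < (2:ℝ)^(l-1) := by positivity
  have hd : (0:ℝ) < ((l:ℝ)+1)*((l:ℝ)+2) := by positivity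
  have hnum' : 0 ≤ 8*((l:ℝ)+2) - 8*p*((l:ℝ)+1) := by
    by_contra hneg
    push_neg at hneg
    have hdn := div_neg_of_neg_of_pos hneg hd
    nlinarith [hr, hpow, hdn]
  rw [le_div_iff₀ hl1R]
  linarith



end Witnesses

section MainLemmas

lemma posmap_of_decomposable {l : ℕ} {p : ℝ} (hd : IsDecomposable (PhiFam l p)) :
    IsPosMap (PhiFam l p) := by
  obtain ⟨Θ₁, Θ₂, h1, h2, hsum⟩ := hd
  intro X hX
  rw [hsum X]
  refine (genPos Θ₁ h1 X hX).add ?_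
  set Θ₂' : Matrix (Fin 2) (Fin 2) ℂ →ₗ[ℂ] Matrix (Fin (l+1)) (Fin (l+1)) ℂ :=
    Θ₂ ∘ₗ (Matrix.transposeLinearEquiv (Fin 2) (Fin 2) ℂ ℂ).toLinearMap with hT
  have hco : ⇑Θ₂' = fun X => Θ₂ Xᵀ := rfl
  have h2' : (choi ⇑Θ₂').PosSemidef := by rw [hco]; exact h2
  have := genPos Θ₂' h2' Xᵀ hX.transpose
  rw [hco] at this
  simpa using this

lemma decomposable_of_bounds {l : ℕ} (hl : 1 ≤ l) {p : ℝ} (h0 : 0 ≤ p)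
    (h1 : p ≤ ((l:ℝ)+2)/((l:ℝ)+1)) : IsDecomposable (PhiFam l p) := by
  have hl1R : (0:ℝ) < (l:ℝ)+1 := by positivity
  have hl2R : (0:ℝ) < (l:ℝ)+2 := by positivity
  have hps : (0:ℝ) < ((l:ℝ)+2)/((l:ℝ)+1) := by positivity
  have hl1 : ((l:ℂ)+1) ≠ 0 := by
    have : ((l+1:ℕ):ℂ) ≠ 0 := Nat.cast_ne_zero.mpr l.succ_ne_zero
    push_cast at this; exact this
  have hl2 : ((l:ℂ)+2) ≠ 0 := by
    have : ((l+2:ℕ):ℂ) ≠ 0 := Nat.cast_ne_zero.mpr (by omega)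
    push_cast at this; exact this
  refine ⟨((1 - p/(((l:ℝ)+2)/((l:ℝ)+1)) : ℝ) : ℂ) • PhiMLM l,
    ((p/(((l:ℝ)+2)/((l:ℝ)+1)) : ℝ) : ℂ) • PhiFamLM l (((l:ℝ)+2)/((l:ℝ)+1)), ?_, ?_, ?_⟩
  · rw [IsCP, choi_smul]
    refine smulPSD ?_ ?_
    · have : p/(((l:ℝ)+2)/((l:ℝ)+1)) ≤ 1 := by
        rw [div_le_one hps]; exact h1
      linarith
    · have : choi (⇑(PhiMLM l)) = choi (PhiM l) := rfl
      rw [this, choiM_eq l hl]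
      exact posSemidef_conjTranspose_mul_self _
  · rw [IsCoCP, IsCP]
    have hfun : (fun X => ((((p/(((l:ℝ)+2)/((l:ℝ)+1)) : ℝ) : ℂ) •
        PhiFamLM l (((l:ℝ)+2)/((l:ℝ)+1))) Xᵀ))
        = fun X => ((p/(((l:ℝ)+2)/((l:ℝ)+1)) : ℝ) : ℂ) •
          ((PhiFam l (((l:ℝ)+2)/((l:ℝ)+1))) Xᵀ) := by
      funext X
      rw [LinearMap.smul_apply, PhiFamLM_coe]
    rw [hfun]
    have : choi (fun X => ((p/(((l:ℝ)+2)/((l:ℝ)+1)) : ℝ) : ℂ) •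
        ((PhiFam l (((l:ℝ)+2)/((l:ℝ)+1))) Xᵀ))
        = ((p/(((l:ℝ)+2)/((l:ℝ)+1)) : ℝ) : ℂ) •
          choi (fun X => (PhiFam l (((l:ℝ)+2)/((l:ℝ)+1))) Xᵀ) := by
      ext x y
      simp [choi]
    rw [this, choi_of_transpose, choiPT_eq l hl]
    exact smulPSD (by positivity) (posSemidef_conjTranspose_mul_self _).transpose
  · intro X
    rw [LinearMap.smul_apply, LinearMap.smul_apply, PhiFamLM_coe]
    have hM : (PhiMLM l) X = PhiM l X := rfl
    rw [hM]
    show PhiFam l p X = _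
    unfold PhiFam
    ext i j
    simp only [Matrix.add_apply, Matrix.smul_apply, smul_eq_mul]
    push_cast
    field_simp
    ring

end MainLemmas

/-- for `l ≥ 1` and `p ∈ ℝ`, the map `Φ_p` is positive iff
`0 ≤ p ≤ (l+2)/(l+1)` iff `Φ_p` is decomposable. -/
theorem stmt_14 (l : ℕ) (hl : 1 ≤ l) (p : ℝ) :
    (IsPosMap (PhiFam l p) ↔ (0 ≤ p ∧ p ≤ ((l : ℝ) + 2) / ((l : ℝ) + 1))) ∧
    (IsDecomposable (PhiFam l p) ↔ (0 ≤ p ∧ p ≤ ((l : ℝ) + 2) / ((l : ℝ) + 1))) := by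
  constructor
  · constructor
    · intro h
      exact ⟨lower_bound hl h, upper_bound hl h⟩
    · intro ⟨h0, h1⟩
      exact posmap_of_decomposable (decomposable_of_bounds hl h0 h1)
  · constructor
    · intro hd
      have h := posmap_of_decomposable hd
      exact ⟨lower_bound hl h, upper_bound hl h⟩
    · intro ⟨h0, h1⟩
      exact decomposable_of_bounds hl h0 h1

end
end

section
/- Let l ≥ 1 be an integer and p₀ = (l+2)/(l+1). Then for all X ∈ M₂(ℂ), Φ_{p₀}(X) = R_l · (Φ⁻(X))ᵗ · R_l*, where R_l = ∑_{j=0}^{l} (−1)^j E_{l−j,j} ∈ M_{l+1}(ℂ) (a unitary) and ᵗ denotes transpose. In particular, Φ_{p₀} is completely co-positive. -/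
open Matrix BigOperators
open scoped Kronecker ComplexOrder

noncomputable section

/-- The unitary `R_l = ∑_{j=0}^{l} (-1)^j E_{l-j,j}`. -/
def Runi (l : ℕ) : Matrix (Fin (l+1)) (Fin (l+1)) ℂ :=
  fun i j => if (i : ℕ) + (j : ℕ) = l then (-1 : ℂ) ^ (j : ℕ) else 0

lemma Hsum1 {l : ℕ} (m n : ℕ) (f g : ℂ) :
    (∑ t : Fin l, (if m = (t:ℕ)+1 then f else 0) * (if n = (t:ℕ)+1 then g else 0))
      = if m = n ∧ 1 ≤ m ∧ m ≤ l then f * g else 0 := by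
  split_ifs with h
  · have hml : m - 1 < l := by omega
    set t0 : Fin l := ⟨m-1, hml⟩ with ht0
    have hv : (t0:ℕ) = m - 1 := rfl
    rw [Finset.sum_eq_single t0]
    · have c1 : m = (t0:ℕ)+1 := by omega
      have c2 : n = (t0:ℕ)+1 := by omega
      rw [if_pos c1, if_pos c2]
    · intro t _ ht
      have hne : (t:ℕ) ≠ (t0:ℕ) := fun hh => ht (Fin.ext hh)
      rw [if_neg (show ¬(m = (t:ℕ)+1) by omega)]
      ring
    · intro h'; exact absurd (Finset.mem_univ _) h'
  · rw [Finset.sum_eq_zero]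
    intro t _
    by_cases c1 : m = (t:ℕ)+1
    · by_cases c2 : n = (t:ℕ)+1
      · exact absurd ⟨by omega, by omega, by omega⟩ h
      · rw [if_neg c2]; ring
    · rw [if_neg c1]; ring

lemma Hsum2 {l : ℕ} (m n : ℕ) (f g : ℂ) :
    (∑ t : Fin l, (if m = (t:ℕ)+1 then f else 0) * (if n = (t:ℕ) then g else 0))
      = if m = n+1 ∧ m ≤ l then f * g else 0 := by
  split_ifs with h
  · have hml : n < l := by omega
    set t0 : Fin l := ⟨n, hml⟩ with ht0
    have hv : (t0:ℕ) = n := rfl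
    rw [Finset.sum_eq_single t0]
    · have c1 : m = (t0:ℕ)+1 := by omega
      have c2 : n = (t0:ℕ) := by omega
      rw [if_pos c1, if_pos c2]
    · intro t _ ht
      have hne : (t:ℕ) ≠ (t0:ℕ) := fun hh => ht (Fin.ext hh)
      rw [if_neg (show ¬(m = (t:ℕ)+1) by omega)]
      ring
    · intro h'; exact absurd (Finset.mem_univ _) h'
  · rw [Finset.sum_eq_zero]
    intro t _
    by_cases c1 : m = (t:ℕ)+1
    · by_cases c2 : n = (t:ℕ)
      · exact absurd ⟨by omega, by omega⟩ h
      · rw [if_neg c2]; ring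
    · rw [if_neg c1]; ring

lemma Hsum3 {l : ℕ} (m n : ℕ) (f g : ℂ) :
    (∑ t : Fin l, (if m = (t:ℕ) then f else 0) * (if n = (t:ℕ)+1 then g else 0))
      = if n = m+1 ∧ n ≤ l then f * g else 0 := by
  split_ifs with h
  · have hml : m < l := by omega
    set t0 : Fin l := ⟨m, hml⟩ with ht0
    have hv : (t0:ℕ) = m := rfl
    rw [Finset.sum_eq_single t0]
    · have c1 : m = (t0:ℕ) := by omega
      have c2 : n = (t0:ℕ)+1 := by omega
      rw [if_pos c1, if_pos c2]
    · intro t _ ht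
      have hne : (t:ℕ) ≠ (t0:ℕ) := fun hh => ht (Fin.ext hh)
      rw [if_neg (show ¬(m = (t:ℕ)) by omega)]
      ring
    · intro h'; exact absurd (Finset.mem_univ _) h'
  · rw [Finset.sum_eq_zero]
    intro t _
    by_cases c1 : m = (t:ℕ)
    · by_cases c2 : n = (t:ℕ)+1
      · exact absurd ⟨by omega, by omega⟩ h
      · rw [if_neg c2]; ring
    · rw [if_neg c1]; ring

lemma Hsum4 {l : ℕ} (m n : ℕ) (f g : ℂ) :
    (∑ t : Fin l, (if m = (t:ℕ) then f else 0) * (if n = (t:ℕ) then g else 0))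
      = if m = n ∧ m < l then f * g else 0 := by
  split_ifs with h
  · have hml : m < l := by omega
    set t0 : Fin l := ⟨m, hml⟩ with ht0
    have hv : (t0:ℕ) = m := rfl
    rw [Finset.sum_eq_single t0]
    · have c1 : m = (t0:ℕ) := by omega
      have c2 : n = (t0:ℕ) := by omega
      rw [if_pos c1, if_pos c2]
    · intro t _ ht
      have hne : (t:ℕ) ≠ (t0:ℕ) := fun hh => ht (Fin.ext hh)
      rw [if_neg (show ¬(m = (t:ℕ)) by omega)]
      ring
    · intro h'; exact absurd (Finset.mem_univ _) h'
  · rw [Finset.sum_eq_zero]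
    intro t _
    by_cases c1 : m = (t:ℕ)
    · by_cases c2 : n = (t:ℕ)
      · exact absurd ⟨by omega, by omega⟩ h
      · rw [if_neg c2]; ring
    · rw [if_neg c1]; ring


lemma phiFam_p0 (l : ℕ) (hl : 1 ≤ l) (X : Matrix (Fin 2) (Fin 2) ℂ) (i j : Fin (l+1)) :
    PhiFam l (((l:ℝ)+2)/((l:ℝ)+1)) X i j =
      (2 / ((l : ℂ) * ((l : ℂ) + 1))) *
      (if (i : ℕ) = (j : ℕ) then
        ((i : ℕ) : ℂ) * X 0 0 + ((l - (i : ℕ) : ℕ) : ℂ) * X 1 1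
       else if (j : ℕ) = (i : ℕ) + 1 then
        -(((Real.sqrt ((l - (i : ℕ)) * ((i : ℕ) + 1)) : ℝ) : ℂ)) * X 0 1
       else if (i : ℕ) = (j : ℕ) + 1 then
        -(((Real.sqrt ((l - (j : ℕ)) * ((j : ℕ) + 1)) : ℝ) : ℂ)) * X 1 0
       else 0) := by
  have hi : (i:ℕ) ≤ l := by omega
  have hL0 : (l:ℂ) ≠ 0 := Nat.cast_ne_zero.mpr (by omega)
  have hL1 : (l:ℂ) + 1 ≠ 0 := by
    have : ((l+1 : ℕ):ℂ) ≠ 0 := Nat.cast_ne_zero.mpr (by omega)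
    push_cast at this; exact this
  have hL2 : (l:ℂ) + 2 ≠ 0 := by
    have : ((l+2 : ℕ):ℂ) ≠ 0 := Nat.cast_ne_zero.mpr (by omega)
    push_cast at this; exact this
  have hR1 : (l:ℝ) + 1 ≠ 0 := by positivity
  simp only [PhiFam, PhiM, PhiP, Matrix.add_apply, Matrix.smul_apply, smul_eq_mul]
  split_ifs with h1 h2 h3
  · push_cast [Nat.cast_sub hi]
    field_simp
    ring
  · push_cast; field_simp; ring
  · push_cast; field_simp; ring
  · push_cast; ring

lemma conj_entry (l : ℕ) (M : Matrix (Fin (l+1)) (Fin (l+1)) ℂ) (i k : Fin (l+1)) :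
    (Runi l * Mᵀ * (Runi l)ᴴ) i k =
      (-1:ℂ)^((i:ℕ)+(k:ℕ)) * M ⟨l - (k:ℕ), by omega⟩ ⟨l - (i:ℕ), by omega⟩ := by
  have hi : (i:ℕ) ≤ l := by omega
  have hk : (k:ℕ) ≤ l := by omega
  have inner : ∀ m : Fin (l+1), (Runi l * Mᵀ) i m
      = (-1:ℂ)^(l - (i:ℕ)) * M m ⟨l - (i:ℕ), by omega⟩ := by
    intro m
    rw [Matrix.mul_apply, Finset.sum_eq_single (⟨l - (i:ℕ), by omega⟩ : Fin (l+1))]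
    · simp only [Runi, Matrix.transpose_apply]
      rw [if_pos (by omega)]
    · intro b _ hb
      have hbv : (b:ℕ) ≠ l - (i:ℕ) := by
        intro h; exact hb (Fin.ext h)
      simp only [Runi, Matrix.transpose_apply]
      rw [if_neg (by omega)]
      ring
    · intro h; exact absurd (Finset.mem_univ _) h
  rw [Matrix.mul_apply, Finset.sum_eq_single (⟨l - (k:ℕ), by omega⟩ : Fin (l+1))]
  · rw [inner]
    simp only [Matrix.conjTranspose_apply, Runi]
    rw [if_pos (by omega)]
    have hstar : star ((-1:ℂ)^(l - (k:ℕ))) = (-1:ℂ)^(l - (k:ℕ)) := by simp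
    rw [hstar]
    have hs : (-1:ℂ)^(l-(i:ℕ)) * (-1:ℂ)^(l-(k:ℕ)) = (-1:ℂ)^((i:ℕ)+(k:ℕ)) := by
      rw [← pow_add, neg_one_pow_eq_pow_mod_two (R := ℂ),
        neg_one_pow_eq_pow_mod_two (R := ℂ) ((i:ℕ)+(k:ℕ))]
      congr 1; omega
    linear_combination (M ⟨l - (k:ℕ), by omega⟩ ⟨l - (i:ℕ), by omega⟩) * hs
  · intro b _ hb
    have hbv : (b:ℕ) ≠ l - (k:ℕ) := by
      intro h; exact hb (Fin.ext h)
    simp only [Matrix.conjTranspose_apply, Runi]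
    rw [if_neg (by omega)]
    simp
  · intro h; exact absurd (Finset.mem_univ _) h

lemma runi_unitary (l : ℕ) : Runi l * (Runi l)ᴴ = 1 := by
  ext i k
  have hi : (i:ℕ) ≤ l := by omega
  rw [Matrix.mul_apply, Finset.sum_eq_single (⟨l - (i:ℕ), by omega⟩ : Fin (l+1))]
  · simp only [Runi, Matrix.conjTranspose_apply, Matrix.one_apply]
    rw [if_pos (by omega)]
    by_cases hik : i = k
    · subst hik
      rw [if_pos (by omega), if_pos rfl]
      have : star ((-1:ℂ)^(l - (i:ℕ))) = (-1:ℂ)^(l - (i:ℕ)) := by simp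
      rw [this, ← pow_add, neg_one_pow_eq_pow_mod_two (R := ℂ),
        show ((l - (i:ℕ)) + (l - (i:ℕ))) % 2 = 0 by omega, pow_zero]
    · have hv : (i:ℕ) ≠ (k:ℕ) := fun h => hik (Fin.ext h)
      rw [if_neg (by omega), if_neg hik]
      simp
  · intro b _ hb
    have hbv : (b:ℕ) ≠ l - (i:ℕ) := by
      intro h; exact hb (Fin.ext h)
    simp only [Runi, Matrix.conjTranspose_apply]
    rw [if_neg (by omega)]
    simp
  · intro h; exact absurd (Finset.mem_univ _) h

lemma part2 (l : ℕ) (hl : 1 ≤ l) (X : Matrix (Fin 2) (Fin 2) ℂ) :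
    PhiFam l (((l : ℝ) + 2) / ((l : ℝ) + 1)) X = Runi l * (PhiM l X)ᵀ * (Runi l)ᴴ := by
  ext i k
  have hi : (i:ℕ) ≤ l := by omega
  have hk : (k:ℕ) ≤ l := by omega
  rw [conj_entry, phiFam_p0 l hl]
  simp only [PhiM]
  split_ifs with a1 b1 b2 b3 a2 b1 b2 b3 a3 b1 b2 b3 b1 b2 b3
  · have hsign : (-1:ℂ)^((i:ℕ)+(k:ℕ)) = 1 := by
      rw [neg_one_pow_eq_pow_mod_two (R := ℂ), show ((i:ℕ)+(k:ℕ)) % 2 = 0 by omega, pow_zero]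
    rw [hsign, one_mul, show l - (l - (k:ℕ)) = (i:ℕ) by omega, show l - (k:ℕ) = l - (i:ℕ) by omega]
  · exfalso; omega
  · exfalso; omega
  · exfalso; omega
  · exfalso; omega
  · have hsign : (-1:ℂ)^((i:ℕ)+(k:ℕ)) = -1 := by
      rw [neg_one_pow_eq_pow_mod_two (R := ℂ), show ((i:ℕ)+(k:ℕ)) % 2 = 1 by omega, pow_one]
    rw [hsign]
    have hkv : ((k:ℕ):ℝ) = ((i:ℕ):ℝ) + 1 := by exact_mod_cast a2
    have harg : ((l:ℝ) - ((l - (k:ℕ) : ℕ):ℝ)) * (((l - (k:ℕ) : ℕ):ℝ) + 1)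
        = ((l:ℝ) - ((i:ℕ):ℝ)) * (((i:ℕ):ℝ) + 1) := by
      push_cast [Nat.cast_sub hk]
      rw [hkv]; ring
    rw [harg]
    ring
  · exfalso; omega
  · exfalso; omega
  · exfalso; omega
  · exfalso; omega
  · have hsign : (-1:ℂ)^((i:ℕ)+(k:ℕ)) = -1 := by
      rw [neg_one_pow_eq_pow_mod_two (R := ℂ), show ((i:ℕ)+(k:ℕ)) % 2 = 1 by omega, pow_one]
    rw [hsign]
    have hiv : ((i:ℕ):ℝ) = ((k:ℕ):ℝ) + 1 := by exact_mod_cast a3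
    have harg : ((l:ℝ) - ((l - (i:ℕ) : ℕ):ℝ)) * (((l - (i:ℕ) : ℕ):ℝ) + 1)
        = ((l:ℝ) - ((k:ℕ):ℝ)) * (((k:ℕ):ℝ) + 1) := by
      push_cast [Nat.cast_sub hi]
      rw [hiv]; ring
    rw [harg]
    ring
  · exfalso; omega
  · exfalso; omega
  · exfalso; omega
  · exfalso; omega
  · ring

/-- opaque square-root helper -/
def csq (l : ℕ) (u : ℝ) : ℝ := Real.sqrt (2 / ((l:ℝ) * ((l:ℝ)+1)) * u)

def Bmat (l : ℕ) : Matrix (Fin l) (Fin 2 × Fin (l+1)) ℂ :=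
  fun t x =>
    if x.1 = 0 then
      (((if (x.2:ℕ) = (t:ℕ)+1 then -csq l ((x.2:ℕ):ℝ) else 0 : ℝ)) : ℂ)
    else
      (((if (x.2:ℕ) = (t:ℕ) then csq l ((l:ℝ) - ((x.2:ℕ):ℝ)) else 0 : ℝ)) : ℂ)

lemma star_Bmat (l : ℕ) (t : Fin l) (x : Fin 2 × Fin (l+1)) :
    star (Bmat l t x) = Bmat l t x := by
  unfold Bmat
  split_ifs <;> simp [Complex.star_def, Complex.conj_ofReal]

lemma part3 (l : ℕ) (hl : 1 ≤ l) :
    IsCP (fun X : Matrix (Fin 2) (Fin 2) ℂ =>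
        PhiFam l (((l : ℝ) + 2) / ((l : ℝ) + 1)) Xᵀ) := by
  have key : choi (fun X : Matrix (Fin 2) (Fin 2) ℂ =>
      PhiFam l (((l : ℝ) + 2) / ((l : ℝ) + 1)) Xᵀ) = (Bmat l)ᴴ * Bmat l := by
    ext x y
    obtain ⟨a, i⟩ := x
    obtain ⟨b, j⟩ := y
    have hi : (i:ℕ) ≤ l := by omega
    have hj : (j:ℕ) ≤ l := by omega
    have hir : ((i:ℕ):ℝ) ≤ (l:ℝ) := by exact_mod_cast hi
    have hjr : ((j:ℕ):ℝ) ≤ (l:ℝ) := by exact_mod_cast hj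
    have hl0 : (0:ℝ) < (l:ℝ) := by exact_mod_cast hl
    have hT : (Matrix.single a b (1:ℂ))ᵀ = Matrix.single b a 1 := by
      ext r s
      simp only [Matrix.transpose_apply, Matrix.single, Matrix.of_apply]
      by_cases h1 : a = s <;> by_cases h2 : b = r <;> simp [h1, h2]
    have hmul : ∀ y', ((Bmat l)ᴴ * Bmat l) (a, i) y'
        = ∑ t : Fin l, Bmat l t (a, i) * Bmat l t y' := by
      intro y'
      rw [Matrix.mul_apply]
      congr 1
      ext t
      rw [Matrix.conjTranspose_apply, star_Bmat]
    simp only [choi]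
    rw [hT, hmul, phiFam_p0 l hl]
    have hsq1 : ∀ u : ℝ, 0 ≤ u → csq l u * csq l u = 2 / ((l:ℝ) * ((l:ℝ)+1)) * u := by
      intro u hu
      unfold csq
      exact Real.mul_self_sqrt (by positivity)
    have hsq2 : ∀ u v : ℝ, 0 ≤ u → 0 ≤ v →
        csq l u * csq l v = 2 / ((l:ℝ) * ((l:ℝ)+1)) * Real.sqrt (u * v) := by
      intro u v hu hv
      unfold csq
      rw [← Real.sqrt_mul (by positivity),
        show 2 / ((l:ℝ) * ((l:ℝ)+1)) * u * (2 / ((l:ℝ) * ((l:ℝ)+1)) * v)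
          = (2 / ((l:ℝ) * ((l:ℝ)+1)))^2 * (u * v) by ring,
        Real.sqrt_mul (sq_nonneg _), Real.sqrt_sq (by positivity)]
    fin_cases a <;> fin_cases b <;>
      simp [Bmat, Matrix.single, Fin.ext_iff] <;>
      simp only [apply_ite Complex.ofReal, Complex.ofReal_neg, Complex.ofReal_zero,
        Hsum1, Hsum2, Hsum3, Hsum4]
    -- case (0,0)
    · split_ifs
      all_goals try rfl
      all_goals try (exfalso; omega)
      all_goals try (rw [show (i:ℕ) = 0 by omega]; simp)
      rename_i h1 hC
      have hji : ((j:ℕ):ℝ) = ((i:ℕ):ℝ) := by exact_mod_cast h1.symm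
      rw [hji, neg_mul_neg, ← Complex.ofReal_mul, hsq1 _ (by positivity)]
      push_cast
      ring
    -- case (0,1)
    · split_ifs
      all_goals try rfl
      all_goals try (exfalso; omega)
      rename_i hx hy h3 hC
      have hIr : ((i:ℕ):ℝ) = ((j:ℕ):ℝ) + 1 := by exact_mod_cast h3
      have e : csq l ((i:ℕ):ℝ) * csq l ((l:ℝ) - ((j:ℕ):ℝ))
          = 2 / ((l:ℝ) * ((l:ℝ)+1)) * Real.sqrt (((l:ℝ) - ((j:ℕ):ℝ)) * (((j:ℕ):ℝ) + 1)) := by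
        rw [hsq2 _ _ (by positivity) (by linarith),
          show ((i:ℕ):ℝ) * ((l:ℝ) - ((j:ℕ):ℝ)) = ((l:ℝ) - ((j:ℕ):ℝ)) * (((j:ℕ):ℝ) + 1) by
            rw [hIr]; ring]
      have eC : ((csq l ((i:ℕ):ℝ) : ℝ) : ℂ) * ((csq l ((l:ℝ) - ((j:ℕ):ℝ)) : ℝ) : ℂ)
          = ((2 / ((l:ℝ) * ((l:ℝ)+1)) * Real.sqrt (((l:ℝ) - ((j:ℕ):ℝ)) * (((j:ℕ):ℝ) + 1)) : ℝ) : ℂ) := by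
        exact_mod_cast congrArg Complex.ofReal e
      push_cast at eC
      linear_combination eC
    -- case (1,0)
    · split_ifs
      all_goals try rfl
      all_goals try (exfalso; omega)
      rename_i hx h3 hC
      have hJr : ((j:ℕ):ℝ) = ((i:ℕ):ℝ) + 1 := by exact_mod_cast h3
      have e : csq l ((l:ℝ) - ((i:ℕ):ℝ)) * csq l ((j:ℕ):ℝ)
          = 2 / ((l:ℝ) * ((l:ℝ)+1)) * Real.sqrt (((l:ℝ) - ((i:ℕ):ℝ)) * (((i:ℕ):ℝ) + 1)) := by
        rw [hsq2 _ _ (by linarith) (by positivity),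
          show ((l:ℝ) - ((i:ℕ):ℝ)) * ((j:ℕ):ℝ) = ((l:ℝ) - ((i:ℕ):ℝ)) * (((i:ℕ):ℝ) + 1) by
            rw [hJr]]
      have eC : ((csq l ((l:ℝ) - ((i:ℕ):ℝ)) : ℝ) : ℂ) * ((csq l ((j:ℕ):ℝ) : ℝ) : ℂ)
          = ((2 / ((l:ℝ) * ((l:ℝ)+1)) * Real.sqrt (((l:ℝ) - ((i:ℕ):ℝ)) * (((i:ℕ):ℝ) + 1)) : ℝ) : ℂ) := by
        exact_mod_cast congrArg Complex.ofReal e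
      push_cast at eC
      linear_combination eC
    -- case (1,1)
    · split_ifs
      all_goals try rfl
      all_goals try (exfalso; omega)
      all_goals try (rw [show l - (i:ℕ) = 0 by omega]; simp)
      rename_i h1 hC
      have hji : ((j:ℕ):ℝ) = ((i:ℕ):ℝ) := by exact_mod_cast h1.symm
      rw [hji, ← Complex.ofReal_mul, hsq1 _ (by linarith)]
      push_cast [Nat.cast_sub hi]
      ring
  unfold IsCP
  rw [key]
  exact Matrix.posSemidef_conjTranspose_mul_self (Bmat l)

/-- for `p₀ = (l+2)/(l+1)`, `Φ_{p₀}(X) = R_l (Φ⁻(X))ᵗ R_l*` for all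
`X`, where `R_l` is a unitary; in particular `Φ_{p₀}` is completely co-positive. -/
theorem stmt_17 (l : ℕ) (hl : 1 ≤ l) :
    (Runi l * (Runi l)ᴴ = 1)
    ∧ (∀ X : Matrix (Fin 2) (Fin 2) ℂ,
        PhiFam l (((l : ℝ) + 2) / ((l : ℝ) + 1)) X = Runi l * (PhiM l X)ᵀ * (Runi l)ᴴ)
    ∧ IsCP (fun X : Matrix (Fin 2) (Fin 2) ℂ =>
        PhiFam l (((l : ℝ) + 2) / ((l : ℝ) + 1)) Xᵀ) :=
  ⟨runi_unitary l, fun X => part2 l hl X, part3 l hl⟩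

end
end

section
/- Let l ≥ 1 be an integer. For all X ∈ M₂(ℂ): ∑_{i=1}^{l} K_i X K_i* = Φ⁻(X) and ∑_{i=1}^{l+2} K_{l+i} X K_{l+i}* = Φ⁺(X); i.e., K₁,…,K_l are Kraus operators of Φ⁻ and K_{l+1},…,K_{2l+2} are Kraus operators of Φ⁺. -/
open Matrix BigOperators
open scoped Kronecker ComplexOrder

noncomputable section

lemma krausM (l i : ℕ) (h1 : 1 ≤ i) (h2 : i ≤ l) (X : Matrix (Fin 2) (Fin 2) ℂ)
    (r c : Fin (l+1)) :
    (Kop l i * X * (Kop l i)ᴴ) r c =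
      (2 / ((l:ℂ) * ((l:ℂ)+1))) *
        ((if (r:ℕ) = l - i ∧ (c:ℕ) = l - i then (i:ℂ) * X 0 0 else 0)
        + (if (r:ℕ) = l - i ∧ (c:ℕ) = l - i + 1 then
            ((Real.sqrt ((i:ℝ) * ((l:ℝ) - i + 1)) : ℝ):ℂ) * X 0 1 else 0)
        + (if (r:ℕ) = l - i + 1 ∧ (c:ℕ) = l - i then
            ((Real.sqrt ((i:ℝ) * ((l:ℝ) - i + 1)) : ℝ):ℂ) * X 1 0 else 0)
        + (if (r:ℕ) = l - i + 1 ∧ (c:ℕ) = l - i + 1 then ((l:ℂ) - i + 1) * X 1 1 else 0)) := by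
  have hli : (i:ℝ) ≤ l := by exact_mod_cast h2
  simp only [Matrix.mul_apply, Matrix.conjTranspose_apply, Fin.sum_univ_two, Kop,
    if_pos (show 1 ≤ i ∧ i ≤ l from ⟨h1, h2⟩)]
  norm_num only
  set C : ℂ := ((Real.sqrt (2 / ((l : ℝ) * ((l : ℝ) + 1))) : ℝ) : ℂ) with hCdef
  set e : ℂ := (-1 : ℂ) ^ (i - 1) with hedef
  set qi : ℂ := ((Real.sqrt (i:ℝ) : ℝ) : ℂ) with hqidef
  set qj : ℂ := ((Real.sqrt ((l:ℝ) - (i:ℝ) + 1) : ℝ) : ℂ) with hqjdef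
  set qij : ℂ := ((Real.sqrt ((i:ℝ) * ((l:ℝ) - i + 1)) : ℝ):ℂ) with hqijdef
  have hsC : star C = C := by rw [hCdef]; exact Complex.conj_ofReal _
  have hse : star e = e := by rw [hedef]; simp
  have hsqi : star qi = qi := by rw [hqidef]; exact Complex.conj_ofReal _
  have hsqj : star qj = qj := by rw [hqjdef]; exact Complex.conj_ofReal _
  have hC2 : C^2 = 2 / ((l:ℂ) * ((l:ℂ)+1)) := by
    rw [hCdef, sq, ← Complex.ofReal_mul, Real.mul_self_sqrt (by positivity)]
    push_cast; ring
  have he2 : e^2 = 1 := by rw [hedef, ← pow_mul, mul_comm, pow_mul]; norm_num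
  have hi2 : qi^2 = (i:ℂ) := by
    rw [hqidef, sq, ← Complex.ofReal_mul, Real.mul_self_sqrt (by positivity)]; norm_num
  have hj2 : qj^2 = (l:ℂ) - i + 1 := by
    rw [hqjdef, sq, ← Complex.ofReal_mul, Real.mul_self_sqrt (by linarith)]
    push_cast; ring
  have hij : qi * qj = qij := by
    rw [hqidef, hqjdef, hqijdef, ← Complex.ofReal_mul, ← Real.sqrt_mul (by positivity)]
  have hij' : qj * qi = qij := by rw [mul_comm]; exact hij
  have he2' : ((-1:ℂ))^((i-1)*2) = 1 := by rw [mul_comm, pow_mul]; norm_num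
  simp only [ite_and]
  split_ifs <;> first
    | omega
    | (simp only [mul_zero, zero_mul, add_zero, zero_add, star_zero, star_mul', hsC, hse,
        hsqi, hsqj, mul_one, one_mul]
       try simp only [← hij]
       try ring_nf
       try simp only [hC2, he2, he2', hi2, hj2, hij, hij', one_mul, mul_one]
       try ring_nf
       try simp only [hC2, he2, he2', hi2, hj2, hij, hij', one_mul, mul_one]
       try ring_nf)

lemma krausP (l i : ℕ) (h1 : 1 ≤ i) (h2 : i ≤ l + 2) (X : Matrix (Fin 2) (Fin 2) ℂ)
    (r c : Fin (l+1)) :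
    (Kop l (l + i) * X * (Kop l (l + i))ᴴ) r c =
      (2 / (((l:ℂ)+1) * ((l:ℂ)+2))) *
        ((if (r:ℕ) = l + 1 - i ∧ (c:ℕ) = l + 1 - i then ((l:ℂ) + 2 - i) * X 0 0 else 0)
        + (if (r:ℕ) = l + 1 - i ∧ (c:ℕ) = l + 2 - i then
            -(((Real.sqrt (((l:ℝ) + 2 - i) * ((i:ℝ) - 1)) : ℝ):ℂ)) * X 0 1 else 0)
        + (if (r:ℕ) = l + 2 - i ∧ (c:ℕ) = l + 1 - i then
            -(((Real.sqrt (((l:ℝ) + 2 - i) * ((i:ℝ) - 1)) : ℝ):ℂ)) * X 1 0 else 0)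
        + (if (r:ℕ) = l + 2 - i ∧ (c:ℕ) = l + 2 - i then ((i:ℂ) - 1) * X 1 1 else 0)) := by
  have hli : (i:ℝ) ≤ l + 2 := by exact_mod_cast h2
  have h1' : (1:ℝ) ≤ i := by exact_mod_cast h1
  simp only [Matrix.mul_apply, Matrix.conjTranspose_apply, Fin.sum_univ_two, Kop,
    if_neg (show ¬(1 ≤ l + i ∧ l + i ≤ l) by omega),
    if_pos (show l + 1 ≤ l + i ∧ l + i ≤ 2 * l + 2 by omega),
    show l + i - l = i from by omega,
    Nat.cast_add,
    show ((l:ℝ) + (i:ℝ)) - (l:ℝ) = (i:ℝ) from by ring]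
  norm_num only
  set C : ℂ := ((Real.sqrt (2 / (((l:ℝ) + 1) * ((l:ℝ) + 2))) : ℝ) : ℂ) with hCdef
  set e : ℂ := (-1 : ℂ) ^ (i - 1) with hedef
  set qa : ℂ := ((Real.sqrt ((l:ℝ) + 2 - (i:ℝ)) : ℝ) : ℂ) with hqadef
  set qb : ℂ := ((Real.sqrt ((i:ℝ) - 1) : ℝ) : ℂ) with hqbdef
  set qab : ℂ := ((Real.sqrt (((l:ℝ) + 2 - i) * ((i:ℝ) - 1)) : ℝ):ℂ) with hqabdef
  have hsC : star C = C := by rw [hCdef]; exact Complex.conj_ofReal _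
  have hse : star e = e := by rw [hedef]; simp
  have hsqa : star qa = qa := by rw [hqadef]; exact Complex.conj_ofReal _
  have hsqb : star qb = qb := by rw [hqbdef]; exact Complex.conj_ofReal _
  have hC2 : C^2 = 2 / (((l:ℂ)+1) * ((l:ℂ)+2)) := by
    rw [hCdef, sq, ← Complex.ofReal_mul, Real.mul_self_sqrt (by positivity)]
    push_cast; ring
  have he2 : e^2 = 1 := by rw [hedef, ← pow_mul, mul_comm, pow_mul]; norm_num
  have he2' : ((-1:ℂ))^((i-1)*2) = 1 := by rw [mul_comm, pow_mul]; norm_num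
  have ha2 : qa^2 = (l:ℂ) + 2 - i := by
    rw [hqadef, sq, ← Complex.ofReal_mul, Real.mul_self_sqrt (by linarith)]
    push_cast; ring
  have hb2 : qb^2 = (i:ℂ) - 1 := by
    rw [hqbdef, sq, ← Complex.ofReal_mul, Real.mul_self_sqrt (by linarith)]
    push_cast; ring
  have hab : qa * qb = qab := by
    rw [hqadef, hqbdef, hqabdef, ← Complex.ofReal_mul, ← Real.sqrt_mul (by linarith)]
  have hab' : qb * qa = qab := by rw [mul_comm]; exact hab
  simp only [ite_and]
  split_ifs <;> first
    | omega
    | (simp only [mul_zero, zero_mul, add_zero, zero_add, star_zero, star_mul', star_neg,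
        neg_mul, mul_neg, neg_neg, hsC, hse, hsqa, hsqb, mul_one, one_mul]
       try simp only [← hab]
       try ring_nf
       try simp only [hC2, he2, he2', ha2, hb2, one_mul, mul_one]
       try ring_nf)

/-- `K₁,…,K_l` are Kraus operators of `Φ⁻` and `K_{l+1},…,K_{2l+2}`
are Kraus operators of `Φ⁺`. -/
theorem stmt_19 (l : ℕ) (hl : 1 ≤ l) (X : Matrix (Fin 2) (Fin 2) ℂ) :
    (∑ i ∈ Finset.Icc 1 l, Kop l i * X * (Kop l i)ᴴ = PhiM l X)
    ∧ (∑ i ∈ Finset.Icc 1 (l + 2), Kop l (l + i) * X * (Kop l (l + i))ᴴ = PhiP l X) := by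
  constructor
  · ext r c
    have hr : (r:ℕ) ≤ l := Nat.lt_succ_iff.mp r.isLt
    have hc : (c:ℕ) ≤ l := Nat.lt_succ_iff.mp c.isLt
    rw [Matrix.sum_apply]
    rw [Finset.sum_congr rfl (fun i hi => krausM l i (Finset.mem_Icc.mp hi).1
      (Finset.mem_Icc.mp hi).2 X r c), ← Finset.mul_sum]
    rw [Finset.sum_add_distrib, Finset.sum_add_distrib, Finset.sum_add_distrib]
    have S1 : (∑ i ∈ Finset.Icc 1 l,
        if (r:ℕ) = l - i ∧ (c:ℕ) = l - i then (i:ℂ) * X 0 0 else 0)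
        = if (r:ℕ) = (c:ℕ) then ((l - (r:ℕ) : ℕ) : ℂ) * X 0 0 else 0 := by
      rcases eq_or_ne (r:ℕ) (c:ℕ) with h | h
      · rw [if_pos h]
        refine (Finset.sum_eq_single (l - (r:ℕ)) ?_ ?_).trans ?_
        · intro b hb hbne; simp only [Finset.mem_Icc] at hb; exact if_neg (by omega)
        · intro hna; simp only [Finset.mem_Icc] at hna
          rw [if_pos ⟨by omega, by omega⟩]
          have : l - (r:ℕ) = 0 := by omega
          rw [this]; simp
        · rw [if_pos ⟨by omega, by omega⟩]
      · rw [if_neg h]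
        refine Finset.sum_eq_zero fun b hb => ?_
        simp only [Finset.mem_Icc] at hb; exact if_neg (by omega)
    have S2 : (∑ i ∈ Finset.Icc 1 l,
        if (r:ℕ) = l - i ∧ (c:ℕ) = l - i + 1 then
          ((Real.sqrt ((i:ℝ) * ((l:ℝ) - i + 1)) : ℝ):ℂ) * X 0 1 else 0)
        = if (c:ℕ) = (r:ℕ) + 1 then
          ((Real.sqrt (((l:ℝ) - (r:ℕ)) * ((r:ℕ) + 1)) : ℝ):ℂ) * X 0 1 else 0 := by
      rcases eq_or_ne (c:ℕ) ((r:ℕ) + 1) with h | h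
      · rw [if_pos h]
        refine (Finset.sum_eq_single (l - (r:ℕ)) ?_ ?_).trans ?_
        · intro b hb hbne; simp only [Finset.mem_Icc] at hb; exact if_neg (by omega)
        · intro hna; exact absurd (Finset.mem_Icc.mpr ⟨by omega, by omega⟩) hna
        · rw [if_pos ⟨by omega, by omega⟩]
          rw [show ((l - (r:ℕ) : ℕ):ℝ) * ((l:ℝ) - ((l - (r:ℕ) : ℕ):ℝ) + 1)
            = ((l:ℝ) - (r:ℕ)) * ((r:ℕ) + 1) from by
              rw [Nat.cast_sub hr]; ring]
      · rw [if_neg h]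
        refine Finset.sum_eq_zero fun b hb => ?_
        simp only [Finset.mem_Icc] at hb; exact if_neg (by omega)
    have S3 : (∑ i ∈ Finset.Icc 1 l,
        if (r:ℕ) = l - i + 1 ∧ (c:ℕ) = l - i then
          ((Real.sqrt ((i:ℝ) * ((l:ℝ) - i + 1)) : ℝ):ℂ) * X 1 0 else 0)
        = if (r:ℕ) = (c:ℕ) + 1 then
          ((Real.sqrt (((l:ℝ) - (c:ℕ)) * ((c:ℕ) + 1)) : ℝ):ℂ) * X 1 0 else 0 := by
      rcases eq_or_ne (r:ℕ) ((c:ℕ) + 1) with h | h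
      · rw [if_pos h]
        refine (Finset.sum_eq_single (l - (c:ℕ)) ?_ ?_).trans ?_
        · intro b hb hbne; simp only [Finset.mem_Icc] at hb; exact if_neg (by omega)
        · intro hna; exact absurd (Finset.mem_Icc.mpr ⟨by omega, by omega⟩) hna
        · rw [if_pos ⟨by omega, by omega⟩]
          rw [show ((l - (c:ℕ) : ℕ):ℝ) * ((l:ℝ) - ((l - (c:ℕ) : ℕ):ℝ) + 1)
            = ((l:ℝ) - (c:ℕ)) * ((c:ℕ) + 1) from by
              rw [Nat.cast_sub hc]; ring]
      · rw [if_neg h]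
        refine Finset.sum_eq_zero fun b hb => ?_
        simp only [Finset.mem_Icc] at hb; exact if_neg (by omega)
    have S4 : (∑ i ∈ Finset.Icc 1 l,
        if (r:ℕ) = l - i + 1 ∧ (c:ℕ) = l - i + 1 then ((l:ℂ) - i + 1) * X 1 1 else 0)
        = if (r:ℕ) = (c:ℕ) then ((r:ℕ) : ℂ) * X 1 1 else 0 := by
      rcases eq_or_ne (r:ℕ) (c:ℕ) with h | h
      · rw [if_pos h]
        rcases Nat.eq_zero_or_pos (r:ℕ) with h0 | h0
        · refine (Finset.sum_eq_zero fun b hb => ?_).trans ?_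
          · simp only [Finset.mem_Icc] at hb; exact if_neg (by omega)
          · rw [h0]; simp
        · refine (Finset.sum_eq_single (l + 1 - (r:ℕ)) ?_ ?_).trans ?_
          · intro b hb hbne; simp only [Finset.mem_Icc] at hb; exact if_neg (by omega)
          · intro hna; exact absurd (Finset.mem_Icc.mpr ⟨by omega, by omega⟩) hna
          · rw [if_pos ⟨by omega, by omega⟩, Nat.cast_sub (show (r:ℕ) ≤ l + 1 by omega)]
            push_cast; ring
      · rw [if_neg h]
        refine Finset.sum_eq_zero fun b hb => ?_
        simp only [Finset.mem_Icc] at hb; exact if_neg (by omega)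
    rw [S1, S2, S3, S4]
    show _ = PhiM l X r c
    rw [PhiM]
    split_ifs <;> first | omega | ring
  · ext r c
    have hr : (r:ℕ) ≤ l := Nat.lt_succ_iff.mp r.isLt
    have hc : (c:ℕ) ≤ l := Nat.lt_succ_iff.mp c.isLt
    rw [Matrix.sum_apply]
    rw [Finset.sum_congr rfl (fun i hi => krausP l i (Finset.mem_Icc.mp hi).1
      (Finset.mem_Icc.mp hi).2 X r c), ← Finset.mul_sum]
    rw [Finset.sum_add_distrib, Finset.sum_add_distrib, Finset.sum_add_distrib]
    have S1 : (∑ i ∈ Finset.Icc 1 (l + 2),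
        if (r:ℕ) = l + 1 - i ∧ (c:ℕ) = l + 1 - i then ((l:ℂ) + 2 - i) * X 0 0 else 0)
        = if (r:ℕ) = (c:ℕ) then (((r:ℕ) : ℂ) + 1) * X 0 0 else 0 := by
      rcases eq_or_ne (r:ℕ) (c:ℕ) with h | h
      · rw [if_pos h]
        refine (Finset.sum_eq_single (l + 1 - (r:ℕ)) ?_ ?_).trans ?_
        · intro b hb hbne; simp only [Finset.mem_Icc] at hb
          by_cases hcond : (r:ℕ) = l + 1 - b ∧ (c:ℕ) = l + 1 - b
          · rw [if_pos hcond]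
            have hb2 : b = l + 2 := by omega
            rw [hb2]; push_cast; ring_nf
          · exact if_neg hcond
        · intro hna; exact absurd (Finset.mem_Icc.mpr ⟨by omega, by omega⟩) hna
        · rw [if_pos ⟨by omega, by omega⟩, Nat.cast_sub (show (r:ℕ) ≤ l + 1 by omega)]
          push_cast; ring
      · rw [if_neg h]
        refine Finset.sum_eq_zero fun b hb => ?_
        simp only [Finset.mem_Icc] at hb; exact if_neg (by omega)
    have S2 : (∑ i ∈ Finset.Icc 1 (l + 2),
        if (r:ℕ) = l + 1 - i ∧ (c:ℕ) = l + 2 - i then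
          -(((Real.sqrt (((l:ℝ) + 2 - i) * ((i:ℝ) - 1)) : ℝ):ℂ)) * X 0 1 else 0)
        = if (c:ℕ) = (r:ℕ) + 1 then
          -(((Real.sqrt (((l:ℝ) - (r:ℕ)) * ((r:ℕ) + 1)) : ℝ):ℂ)) * X 0 1 else 0 := by
      rcases eq_or_ne (c:ℕ) ((r:ℕ) + 1) with h | h
      · rw [if_pos h]
        refine (Finset.sum_eq_single (l + 1 - (r:ℕ)) ?_ ?_).trans ?_
        · intro b hb hbne; simp only [Finset.mem_Icc] at hb; exact if_neg (by omega)
        · intro hna; exact absurd (Finset.mem_Icc.mpr ⟨by omega, by omega⟩) hna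
        · rw [if_pos ⟨by omega, by omega⟩]
          rw [show ((l:ℝ) + 2 - ((l + 1 - (r:ℕ) : ℕ):ℝ)) * (((l + 1 - (r:ℕ) : ℕ):ℝ) - 1)
            = ((l:ℝ) - (r:ℕ)) * ((r:ℕ) + 1) from by
              rw [Nat.cast_sub (show (r:ℕ) ≤ l + 1 by omega)]; push_cast; ring]
      · rw [if_neg h]
        refine Finset.sum_eq_zero fun b hb => ?_
        simp only [Finset.mem_Icc] at hb
        by_cases hcond : (r:ℕ) = l + 1 - b ∧ (c:ℕ) = l + 2 - b
        · rw [if_pos hcond]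
          have hb2 : b = l + 2 := by omega
          rw [hb2, show ((l:ℝ) + 2 - ((l + 2 : ℕ):ℝ)) * (((l + 2 : ℕ):ℝ) - 1) = 0 from by
            push_cast; ring, Real.sqrt_zero]
          simp
        · exact if_neg hcond
    have S3 : (∑ i ∈ Finset.Icc 1 (l + 2),
        if (r:ℕ) = l + 2 - i ∧ (c:ℕ) = l + 1 - i then
          -(((Real.sqrt (((l:ℝ) + 2 - i) * ((i:ℝ) - 1)) : ℝ):ℂ)) * X 1 0 else 0)
        = if (r:ℕ) = (c:ℕ) + 1 then
          -(((Real.sqrt (((l:ℝ) - (c:ℕ)) * ((c:ℕ) + 1)) : ℝ):ℂ)) * X 1 0 else 0 := by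
      rcases eq_or_ne (r:ℕ) ((c:ℕ) + 1) with h | h
      · rw [if_pos h]
        refine (Finset.sum_eq_single (l + 1 - (c:ℕ)) ?_ ?_).trans ?_
        · intro b hb hbne; simp only [Finset.mem_Icc] at hb; exact if_neg (by omega)
        · intro hna; exact absurd (Finset.mem_Icc.mpr ⟨by omega, by omega⟩) hna
        · rw [if_pos ⟨by omega, by omega⟩]
          rw [show ((l:ℝ) + 2 - ((l + 1 - (c:ℕ) : ℕ):ℝ)) * (((l + 1 - (c:ℕ) : ℕ):ℝ) - 1)
            = ((l:ℝ) - (c:ℕ)) * ((c:ℕ) + 1) from by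
              rw [Nat.cast_sub (show (c:ℕ) ≤ l + 1 by omega)]; push_cast; ring]
      · rw [if_neg h]
        refine Finset.sum_eq_zero fun b hb => ?_
        simp only [Finset.mem_Icc] at hb
        by_cases hcond : (r:ℕ) = l + 2 - b ∧ (c:ℕ) = l + 1 - b
        · rw [if_pos hcond]
          have hb2 : b = l + 2 := by omega
          rw [hb2, show ((l:ℝ) + 2 - ((l + 2 : ℕ):ℝ)) * (((l + 2 : ℕ):ℝ) - 1) = 0 from by
            push_cast; ring, Real.sqrt_zero]
          simp
        · exact if_neg hcond
    have S4 : (∑ i ∈ Finset.Icc 1 (l + 2),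
        if (r:ℕ) = l + 2 - i ∧ (c:ℕ) = l + 2 - i then ((i:ℂ) - 1) * X 1 1 else 0)
        = if (r:ℕ) = (c:ℕ) then (((l - (r:ℕ) : ℕ) : ℂ) + 1) * X 1 1 else 0 := by
      rcases eq_or_ne (r:ℕ) (c:ℕ) with h | h
      · rw [if_pos h]
        refine (Finset.sum_eq_single (l + 2 - (r:ℕ)) ?_ ?_).trans ?_
        · intro b hb hbne; simp only [Finset.mem_Icc] at hb; exact if_neg (by omega)
        · intro hna; exact absurd (Finset.mem_Icc.mpr ⟨by omega, by omega⟩) hna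
        · rw [if_pos ⟨by omega, by omega⟩, Nat.cast_sub (show (r:ℕ) ≤ l + 2 by omega),
            Nat.cast_sub hr]
          push_cast; ring
      · rw [if_neg h]
        refine Finset.sum_eq_zero fun b hb => ?_
        simp only [Finset.mem_Icc] at hb; exact if_neg (by omega)
    rw [S1, S2, S3, S4]
    show _ = PhiP l X r c
    rw [PhiP]
    split_ifs <;> first | omega | ring

end
end
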